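/- arXiv:2101.09558 — 3 statements merged into one kernel-verified Lean document; each statement's English description precedes it below -/
import Mathlib

section
/- Let d ≥ 1 and ℓ ≥ (d+1)/2. The Askey function h ↦ (1 - ‖h‖/a)₊^ℓ on ℝ^d, with a > 0, coincides with the Gauss hypergeometric covariance G_d(h; a, (d+1)/2, (d+ℓ+1)/2, (d+ℓ)/2+1); i.e., with α = (d+1)/2, β = (d+ℓ+1)/2, γ = (d+ℓ)/2+1, one has (Γ(β-d/2)Γ(γ-d/2)/(Γ(β-α+γ-d/2)Γ(α-d/2))) u^{β-α+γ-d/2-1} ₂F₁(β-α, γ-α; β-α+γ-d/2; u) = (1-√(1-u))^ℓ for u ∈ [0,1], where u = 1 - ‖h‖²/a². -/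
open Real Filter Finset

/-- Gauss hypergeometric function ₂F₁ as a power series. -/
noncomputable def hyp2F1 (a b c x : ℝ) : ℝ :=
  ∑' n : ℕ, (Real.Gamma (a + n) / Real.Gamma a) * (Real.Gamma (b + n) / Real.Gamma b) *
    (Real.Gamma c / Real.Gamma (c + n)) * x ^ n / (n.factorial : ℝ)

/-- Gauss hypergeometric covariance in ℝ^d (closed ₂F₁ form). -/
noncomputable def gaussHypCov (d : ℕ) (a α β γ : ℝ) (h : EuclideanSpace ℝ (Fin d)) : ℝ :=
  (Real.Gamma (β - (d : ℝ) / 2) * Real.Gamma (γ - (d : ℝ) / 2) /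
      (Real.Gamma (β - α + γ - (d : ℝ) / 2) * Real.Gamma (α - (d : ℝ) / 2))) *
    (max (1 - ‖h‖ ^ 2 / a ^ 2) 0) ^ (β - α + γ - (d : ℝ) / 2 - 1) *
    hyp2F1 (β - α) (γ - α) (β - α + γ - (d : ℝ) / 2) (max (1 - ‖h‖ ^ 2 / a ^ 2) 0)

namespace AskeyAux

section Deriv

variable {b : ℕ → ℝ}

lemma summable_pow_of_lt_one (hb : ∀ n, 0 ≤ b n)
    (hs : ∀ r : ℝ, 0 < r → r < 1 → Summable fun n : ℕ => ((n : ℝ) + 1) * b n * r ^ n)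
    {y : ℝ} (hy : |y| < 1) : Summable fun n => b n * y ^ n := by
  by_cases hy0 : y = 0
  · subst hy0
    refine summable_of_ne_finset_zero (s := {0}) fun n hn => ?_
    have : n ≠ 0 := by simpa using hn
    simp [zero_pow this]
  · have h := hs |y| (abs_pos.2 hy0) hy
    refine Summable.of_norm (h.of_nonneg_of_le (fun n => norm_nonneg _) fun n => ?_)
    have : ‖b n * y ^ n‖ = b n * |y| ^ n := by
      rw [norm_mul, Real.norm_eq_abs, Real.norm_eq_abs, abs_of_nonneg (hb n), abs_pow]
    rw [this]
    have h1 : (0:ℝ) ≤ |y| ^ n := by positivity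
    nlinarith [hb n, mul_nonneg (hb n) h1]

lemma deriv_bound (hb : ∀ n, 0 ≤ b n) {r y : ℝ} (hr0 : 0 < r) (hyr : |y| ≤ r) (n : ℕ) :
    ‖b n * ((n : ℝ) * y ^ (n - 1))‖ ≤ r⁻¹ * (((n : ℝ) + 1) * b n * r ^ n) := by
  cases n with
  | zero =>
    have h := hb 0
    have h2 : 0 ≤ r⁻¹ * b 0 := mul_nonneg (inv_nonneg.2 hr0.le) h
    simp
    nlinarith [h2]
  | succ m =>
    rw [Nat.add_sub_cancel]
    have h1 : ‖b (m + 1) * ((((m + 1 : ℕ)) : ℝ) * y ^ m)‖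
        = b (m + 1) * ((((m + 1 : ℕ)) : ℝ) * |y| ^ m) := by
      rw [norm_mul, norm_mul, Real.norm_eq_abs, Real.norm_eq_abs, Real.norm_eq_abs,
        abs_of_nonneg (hb _), abs_of_nonneg (by positivity), abs_pow]
    rw [h1]
    have h2 : |y| ^ m ≤ r ^ m := pow_le_pow_left₀ (abs_nonneg y) hyr m
    have e : r⁻¹ * ((((m + 1 : ℕ) : ℝ) + 1) * b (m + 1) * r ^ (m + 1))
        = ((((m : ℝ)) + 2) * b (m + 1)) * r ^ m := by
      push_cast; rw [pow_succ]; field_simp; ring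
    rw [e]
    push_cast
    nlinarith [hb (m + 1), pow_nonneg (abs_nonneg y) m, pow_nonneg hr0.le m,
      mul_le_mul_of_nonneg_left h2 (mul_nonneg (by positivity : (0:ℝ) ≤ (m : ℝ) + 1) (hb (m + 1))),
      mul_nonneg (hb (m + 1)) (pow_nonneg hr0.le m)]

lemma summable_deriv_pow (hb : ∀ n, 0 ≤ b n)
    (hs : ∀ r : ℝ, 0 < r → r < 1 → Summable fun n : ℕ => ((n : ℝ) + 1) * b n * r ^ n)
    {y : ℝ} (hy : |y| < 1) : Summable fun n => b n * ((n : ℝ) * y ^ (n - 1)) := by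
  set r : ℝ := (|y| + 1) / 2 with hr
  have hr0 : 0 < r := by positivity
  have hr1 : r < 1 := by rw [hr]; linarith
  have hyr : |y| ≤ r := by rw [hr]; linarith [abs_nonneg y]
  exact Summable.of_norm (((hs r hr0 hr1).mul_left r⁻¹).of_nonneg_of_le
    (fun n => norm_nonneg _) (deriv_bound hb hr0 hyr))

lemma tsum_deriv_shift (hb : ∀ n, 0 ≤ b n)
    (hs : ∀ r : ℝ, 0 < r → r < 1 → Summable fun n : ℕ => ((n : ℝ) + 1) * b n * r ^ n)
    {y : ℝ} (hy : |y| < 1) :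
    ∑' n : ℕ, b n * ((n : ℝ) * y ^ (n - 1)) = ∑' n : ℕ, ((n : ℝ) + 1) * b (n + 1) * y ^ n := by
  rw [Summable.tsum_eq_zero_add (summable_deriv_pow hb hs hy)]
  simp only [Nat.cast_zero, zero_mul, mul_zero, zero_add, Nat.add_sub_cancel]
  exact tsum_congr fun n => by push_cast; ring

lemma hasDerivAt_tsum_pow (hb : ∀ n, 0 ≤ b n)
    (hs : ∀ r : ℝ, 0 < r → r < 1 → Summable fun n : ℕ => ((n : ℝ) + 1) * b n * r ^ n)
    {x : ℝ} (hx : x ∈ Set.Ioo (-1 : ℝ) 1) :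
    HasDerivAt (fun z => ∑' n : ℕ, b n * z ^ n)
      (∑' n : ℕ, ((n : ℝ) + 1) * b (n + 1) * x ^ n) x := by
  have hx1 : |x| < 1 := abs_lt.2 ⟨hx.1, hx.2⟩
  have key : HasDerivAt (fun z => ∑' n : ℕ, b n * z ^ n)
      (∑' n : ℕ, b n * ((n : ℝ) * x ^ (n - 1))) x := by
    refine hasDerivAt_of_tendstoLocallyUniformlyOn (l := atTop) isOpen_Ioo
      (g := fun z => ∑' n : ℕ, b n * z ^ n)
      (g' := fun z => ∑' n : ℕ, b n * ((n : ℝ) * z ^ (n - 1)))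
      (f := fun N (z : ℝ) => ∑ n ∈ Finset.range N, b n * z ^ n)
      (f' := fun N (z : ℝ) => ∑ n ∈ Finset.range N, b n * ((n : ℝ) * z ^ (n - 1))) ?_ ?_ ?_ hx
    · rw [tendstoLocallyUniformlyOn_iff_forall_isCompact isOpen_Ioo]
      intro K hK hKc
      rcases K.eq_empty_or_nonempty with rfl | hKne
      · exact tendstoUniformlyOn_empty
      · obtain ⟨m, hm⟩ := (hKc.image continuous_abs).exists_isGreatest (hKne.image _)
        obtain ⟨x₀, hx₀K, hx₀⟩ := hm.1
        have hm1 : m < 1 := by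
          rw [← hx₀]
          exact abs_lt.2 ⟨(hK hx₀K).1, (hK hx₀K).2⟩
        have hm0 : 0 ≤ m := hx₀ ▸ abs_nonneg x₀
        set r : ℝ := (m + 1) / 2 with hr
        have hr0 : 0 < r := by positivity
        have hr1 : r < 1 := by rw [hr]; linarith
        refine tendstoUniformlyOn_tsum_nat ((hs r hr0 hr1).mul_left r⁻¹)
          fun n y hy => ?_
        refine deriv_bound hb hr0 ?_ n
        have : |y| ≤ m := hm.2 (Set.mem_image_of_mem _ hy)
        rw [hr]; linarith
    · refine Filter.Eventually.of_forall fun N z _ => HasDerivAt.fun_sum fun n _ => ?_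
      exact (hasDerivAt_pow n z).const_mul (b n)
    · intro z hz
      exact (summable_pow_of_lt_one hb hs (abs_lt.2 ⟨hz.1, hz.2⟩)).hasSum.tendsto_sum_nat
  rwa [tsum_deriv_shift hb hs hx1] at key

end Deriv


/-- Series coefficients of ₂F₁(c/2, (c+1)/2; c+1; ·). -/
noncomputable def t (c : ℝ) (n : ℕ) : ℝ :=
  Real.Gamma (c / 2 + n) / Real.Gamma (c / 2) *
    (Real.Gamma ((c + 1) / 2 + n) / Real.Gamma ((c + 1) / 2)) *
    (Real.Gamma (c + 1) / Real.Gamma (c + 1 + n)) / (n.factorial : ℝ)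

variable {c : ℝ} (hc : 0 < c)

include hc

lemma t_pos (n : ℕ) : 0 < t c n := by
  have h1 : (0:ℝ) < c / 2 := by linarith
  have h2 : (0:ℝ) < (c + 1) / 2 := by linarith
  have h3 : (0:ℝ) < c + 1 := by linarith
  unfold t
  have g1 := Real.Gamma_pos_of_pos (show (0:ℝ) < c / 2 + n by positivity)
  have g2 := Real.Gamma_pos_of_pos (show (0:ℝ) < (c + 1) / 2 + n by positivity)
  have g3 := Real.Gamma_pos_of_pos (show (0:ℝ) < c + 1 + n by positivity)
  have g4 := Real.Gamma_pos_of_pos h1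
  have g5 := Real.Gamma_pos_of_pos h2
  have g6 := Real.Gamma_pos_of_pos h3
  have : (0:ℝ) < n.factorial := by exact_mod_cast n.factorial_pos
  positivity

lemma t_zero : t c 0 = 1 := by
  have g4 := (Real.Gamma_pos_of_pos (show (0:ℝ) < c / 2 by linarith)).ne'
  have g5 := (Real.Gamma_pos_of_pos (show (0:ℝ) < (c + 1) / 2 by linarith)).ne'
  have g6 := (Real.Gamma_pos_of_pos (show (0:ℝ) < c + 1 by linarith)).ne'
  unfold t
  push_cast
  simp only [add_zero]
  field_simp
  simp

lemma t_rec (n : ℕ) :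
    ((n : ℝ) + 1) * (c + 1 + n) * t c (n + 1) =
      (c / 2 + n) * ((c + 1) / 2 + n) * t c n := by
  have g1 := (Real.Gamma_pos_of_pos (show (0:ℝ) < c / 2 + n by positivity)).ne'
  have g2 := (Real.Gamma_pos_of_pos (show (0:ℝ) < (c + 1) / 2 + n by positivity)).ne'
  have g3 := (Real.Gamma_pos_of_pos (show (0:ℝ) < c + 1 + n by positivity)).ne'
  have g4 := (Real.Gamma_pos_of_pos (show (0:ℝ) < c / 2 by linarith)).ne'
  have g5 := (Real.Gamma_pos_of_pos (show (0:ℝ) < (c + 1) / 2 by linarith)).ne'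
  have g6 := (Real.Gamma_pos_of_pos (show (0:ℝ) < c + 1 by linarith)).ne'
  have hf : ((n.factorial : ℝ)) ≠ 0 := by exact_mod_cast n.factorial_ne_zero
  have hA : Real.Gamma (c / 2 + ((n + 1 : ℕ) : ℝ)) = (c / 2 + n) * Real.Gamma (c / 2 + n) := by
    rw [show (c / 2 + ((n + 1 : ℕ) : ℝ)) = (c / 2 + n) + 1 by push_cast; ring,
      Real.Gamma_add_one (by positivity)]
  have hB : Real.Gamma ((c + 1) / 2 + ((n + 1 : ℕ) : ℝ))
      = ((c + 1) / 2 + n) * Real.Gamma ((c + 1) / 2 + n) := by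
    rw [show ((c + 1) / 2 + ((n + 1 : ℕ) : ℝ)) = ((c + 1) / 2 + n) + 1 by push_cast; ring,
      Real.Gamma_add_one (by positivity)]
  have hC : Real.Gamma (c + 1 + ((n + 1 : ℕ) : ℝ)) = (c + 1 + n) * Real.Gamma (c + 1 + n) := by
    rw [show (c + 1 + ((n + 1 : ℕ) : ℝ)) = (c + 1 + n) + 1 by push_cast; ring,
      Real.Gamma_add_one (by positivity)]
  have hD : (((n + 1).factorial : ℕ) : ℝ) = ((n : ℝ) + 1) * (n.factorial : ℝ) := by
    rw [Nat.factorial_succ]; push_cast; ring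
  unfold t
  rw [hA, hB, hC, hD]
  field_simp

omit hc in
lemma tendsto_aux (a b : ℝ) :
    Filter.Tendsto (fun n : ℕ => (a + n) / (b + n)) atTop (nhds 1) := by
  have hb : Filter.Tendsto (fun n : ℕ => b + (n : ℝ)) atTop atTop :=
    tendsto_atTop_add_const_left _ b tendsto_natCast_atTop_atTop
  have h0 : Filter.Tendsto (fun n : ℕ => (a - b) / (b + (n : ℝ))) atTop (nhds 0) :=
    Filter.Tendsto.div_atTop tendsto_const_nhds hb
  have h1 : Filter.Tendsto (fun n : ℕ => 1 + (a - b) / (b + (n : ℝ))) atTop (nhds 1) := by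
    simpa using tendsto_const_nhds.add h0
  refine h1.congr' ?_
  filter_upwards [hb.eventually (eventually_gt_atTop 0)] with n hn
  field_simp
  ring

lemma tendsto_ratio : Filter.Tendsto (fun n : ℕ => t c (n + 1) / t c n) atTop (nhds 1) := by
  have h := (tendsto_aux (c / 2) 1).mul (tendsto_aux ((c + 1) / 2) (c + 1))
  rw [mul_one] at h
  refine h.congr fun n => ?_
  have h1 := t_rec hc n
  have h2 := (t_pos hc n).ne'
  have h3 : ((n : ℝ) + 1) ≠ 0 := by positivity
  have h4 : (c + 1 + (n : ℝ)) ≠ 0 := by positivity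
  rw [eq_comm, div_eq_iff h2]
  field_simp
  nlinarith [h1]

lemma summable_master (j k : ℕ) {r : ℝ} (h0 : 0 < r) (h1 : r < 1) :
    Summable (fun n : ℕ => ((n : ℝ) + 1) ^ k * t c (n + j) * r ^ n) := by
  set f : ℕ → ℝ := fun n => ((n : ℝ) + 1) ^ k * t c (n + j) * r ^ n with hf
  have hfpos : ∀ n, 0 < f n := fun n => by
    have := t_pos hc (n + j); positivity
  refine summable_of_ratio_test_tendsto_lt_one h1
    (Filter.Eventually.of_forall fun n => (hfpos n).ne') ?_
  have hshift : Filter.Tendsto (fun n : ℕ => t c (n + j + 1) / t c (n + j)) atTop (nhds 1) := by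
    have := (tendsto_ratio hc).comp (tendsto_add_atTop_nat j)
    exact this
  have h := (((tendsto_aux 2 1).pow k).mul hshift).mul_const r
  rw [one_pow, one_mul, one_mul] at h
  refine h.congr fun n => ?_
  have p1 := t_pos hc (n + j)
  have p2 := t_pos hc (n + 1 + j)
  have hrn : (0 : ℝ) < r ^ n := by positivity
  have e1 : f (n + 1) = ((n : ℝ) + 2) ^ k * t c (n + j + 1) * (r ^ n * r) := by
    simp only [hf]
    rw [show n + 1 + j = n + j + 1 by omega]
    push_cast
    ring
  have e2 : ‖f (n + 1)‖ = f (n + 1) := by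
    rw [Real.norm_eq_abs, abs_of_pos (hfpos (n + 1))]
  have e3 : ‖f n‖ = f n := by rw [Real.norm_eq_abs, abs_of_pos (hfpos n)]
  rw [e2, e3, e1]
  simp only [hf]
  have p3 := t_pos hc (n + j + 1)
  have h1 : ((n : ℝ) + 1) ≠ 0 := by positivity
  rw [div_pow]
  field_simp
  ring


noncomputable def F (c : ℝ) : ℝ → ℝ := fun z => ∑' n : ℕ, t c n * z ^ n

noncomputable def Fd (c : ℝ) : ℝ → ℝ := fun z => ∑' n : ℕ, ((n : ℝ) + 1) * t c (n + 1) * z ^ n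

noncomputable def Fdd (c : ℝ) : ℝ → ℝ :=
  fun z => ∑' n : ℕ, ((n : ℝ) + 1) * ((n : ℝ) + 2) * t c (n + 2) * z ^ n

lemma hasDerivAt_F {x : ℝ} (hx : x ∈ Set.Ioo (-1 : ℝ) 1) : HasDerivAt (F c) (Fd c x) x := by
  have h := hasDerivAt_tsum_pow (b := t c) (fun n => (t_pos hc n).le)
    (fun r h0 h1 => (summable_master hc 0 1 h0 h1).congr fun n => by push_cast; ring) hx
  have e : (∑' n : ℕ, ((n : ℝ) + 1) * t c (n + 1) * x ^ n) = Fd c x := rfl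
  rw [e] at h
  exact h

lemma hasDerivAt_Fd {x : ℝ} (hx : x ∈ Set.Ioo (-1 : ℝ) 1) : HasDerivAt (Fd c) (Fdd c x) x := by
  have h := hasDerivAt_tsum_pow (b := fun n => ((n : ℝ) + 1) * t c (n + 1))
    (fun n => by have := (t_pos hc (n + 1)).le; positivity)
    (fun r h0 h1 => (summable_master hc 1 2 h0 h1).congr fun n => by push_cast; ring) hx
  have e : (∑' n : ℕ, ((n : ℝ) + 1) * ((((n + 1 : ℕ) : ℝ) + 1) * t c (n + 1 + 1)) * x ^ n)
      = Fdd c x := tsum_congr fun n => by push_cast; ring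
  rw [e] at h
  exact h

lemma summable_F {z : ℝ} (h0 : 0 < z) (h1 : z < 1) :
    Summable fun n : ℕ => t c n * z ^ n :=
  (summable_master hc 0 0 h0 h1).congr fun n => by push_cast; ring

lemma ode_F {z : ℝ} (h0 : 0 < z) (h1 : z < 1) :
    z * (1 - z) * Fdd c z + ((c + 1) - (c + 3 / 2) * z) * Fd c z
      - c / 2 * ((c + 1) / 2) * F c z = 0 := by
  have hzn : ∀ n : ℕ, (0:ℝ) < z ^ n := fun n => pow_pos h0 n
  have St : Summable fun n : ℕ => t c n * z ^ n := summable_F hc h0 h1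
  have S1 : Summable fun n : ℕ => ((n : ℝ) + 1) * t c (n + 1) * z ^ n :=
    (summable_master hc 1 1 h0 h1).congr fun n => by push_cast; ring
  have S2 : Summable fun n : ℕ => ((n : ℝ) + 1) * ((n : ℝ) + 2) * t c (n + 2) * z ^ n := by
    refine Summable.of_nonneg_of_le (fun n => ?_) (fun n => ?_)
      ((summable_master hc 2 2 h0 h1).mul_left 2)
    · have := (t_pos hc (n + 2)).le; positivity
    · have ht := (t_pos hc (n + 2)).le
      have hz := (hzn n).le
      have hn : (0:ℝ) ≤ (n:ℝ) := Nat.cast_nonneg n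
      try simp only [Nat.add_zero, pow_one]
      nlinarith [mul_nonneg ht hz, mul_nonneg hn (mul_nonneg ht hz), mul_nonneg (mul_nonneg hn hn) (mul_nonneg ht hz)]
  have Sn : Summable fun n : ℕ => (n : ℝ) * t c n * z ^ n := by
    refine Summable.of_nonneg_of_le (fun n => ?_) (fun n => ?_) (summable_master hc 0 1 h0 h1)
    · have := (t_pos hc n).le; positivity
    · have ht := (t_pos hc n).le
      have hz := (hzn n).le
      have hn : (0:ℝ) ≤ (n:ℝ) := Nat.cast_nonneg n
      try simp only [Nat.add_zero, pow_one]
      nlinarith [mul_nonneg ht hz, mul_nonneg hn (mul_nonneg ht hz), mul_nonneg (mul_nonneg hn hn) (mul_nonneg ht hz)]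
  have Sw : Summable fun n : ℕ => (n : ℝ) * ((n : ℝ) + 1) * t c (n + 1) * z ^ n := by
    refine Summable.of_nonneg_of_le (fun n => ?_) (fun n => ?_) (summable_master hc 1 2 h0 h1)
    · have := (t_pos hc (n + 1)).le; positivity
    · have ht := (t_pos hc (n + 1)).le
      have hz := (hzn n).le
      have hn : (0:ℝ) ≤ (n:ℝ) := Nat.cast_nonneg n
      try simp only [Nat.add_zero, pow_one]
      nlinarith [mul_nonneg ht hz, mul_nonneg hn (mul_nonneg ht hz), mul_nonneg (mul_nonneg hn hn) (mul_nonneg ht hz)]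
  have Sm : Summable fun n : ℕ => ((n : ℝ) - 1) * (n : ℝ) * t c n * z ^ n := by
    refine Summable.of_nonneg_of_le (fun n => ?_) (fun n => ?_) (summable_master hc 0 2 h0 h1)
    · have ht := (t_pos hc n).le
      have hz := (hzn n).le
      rcases Nat.eq_zero_or_pos n with h | h
      · subst h; simp
      · have h1n : (1:ℝ) ≤ n := by exact_mod_cast h
        nlinarith [mul_nonneg ht hz, mul_nonneg (sub_nonneg.2 h1n) (mul_nonneg ht hz),
          mul_nonneg (mul_nonneg (sub_nonneg.2 h1n) (Nat.cast_nonneg n : (0:ℝ) ≤ n))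
            (mul_nonneg ht hz)]
    · have ht := (t_pos hc n).le
      have hz := (hzn n).le
      have hn : (0:ℝ) ≤ (n:ℝ) := Nat.cast_nonneg n
      try simp only [Nat.add_zero, pow_one]
      nlinarith [mul_nonneg ht hz, mul_nonneg hn (mul_nonneg ht hz), mul_nonneg (mul_nonneg hn hn) (mul_nonneg ht hz)]
  have E1 : z * Fd c z = ∑' n : ℕ, (n : ℝ) * t c n * z ^ n := by
    rw [Summable.tsum_eq_zero_add Sn]
    simp only [Nat.cast_zero, zero_mul, zero_add]
    rw [Fd, ← tsum_mul_left]
    exact tsum_congr fun n => by push_cast; ring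
  have E2 : z * Fdd c z = ∑' n : ℕ, (n : ℝ) * ((n : ℝ) + 1) * t c (n + 1) * z ^ n := by
    rw [Summable.tsum_eq_zero_add Sw]
    simp only [Nat.cast_zero, zero_mul, zero_add]
    rw [Fdd, ← tsum_mul_left]
    exact tsum_congr fun n => by push_cast; ring
  have E3 : z * (z * Fdd c z) = ∑' n : ℕ, ((n : ℝ) - 1) * (n : ℝ) * t c n * z ^ n := by
    rw [Summable.tsum_eq_zero_add Sm, E2]
    simp only [Nat.cast_zero, mul_zero, zero_mul, zero_add]
    rw [← tsum_mul_left]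
    exact tsum_congr fun n => by push_cast; ring
  have HA : z * Fdd c z + (c + 1) * Fd c z
      = ∑' n : ℕ, (((n : ℝ) + 1) * ((n : ℝ) + (c + 1)) * t c (n + 1)) * z ^ n := by
    rw [E2, Fd, ← tsum_mul_left,
      ← Summable.tsum_add Sw (S1.mul_left (c + 1))]
    exact tsum_congr fun n => by ring
  have HB : z * (z * Fdd c z) + (c + 3 / 2) * (z * Fd c z) + c / 2 * ((c + 1) / 2) * F c z
      = ∑' n : ℕ, (((n : ℝ) + c / 2) * ((n : ℝ) + (c + 1) / 2) * t c n) * z ^ n := by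
    rw [E3, E1, F, ← tsum_mul_left (a := c + 3 / 2), ← tsum_mul_left (a := c / 2 * ((c + 1) / 2)),
      ← Summable.tsum_add Sm (Sn.mul_left (c + 3 / 2)),
      ← Summable.tsum_add (Sm.add (Sn.mul_left (c + 3 / 2))) (St.mul_left (c / 2 * ((c + 1) / 2)))]
    exact tsum_congr fun n => by ring
  have key : z * (1 - z) * Fdd c z + ((c + 1) - (c + 3 / 2) * z) * Fd c z
      - c / 2 * ((c + 1) / 2) * F c z
      = (z * Fdd c z + (c + 1) * Fd c z)
        - (z * (z * Fdd c z) + (c + 3 / 2) * (z * Fd c z) + c / 2 * ((c + 1) / 2) * F c z) := by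
    ring
  rw [key, HA, HB, ← Summable.tsum_sub
    ((Sw.add (S1.mul_left (c + 1))).congr fun n => by ring)
    (((Sm.add (Sn.mul_left (c + 3 / 2))).add (St.mul_left (c / 2 * ((c + 1) / 2)))).congr
      fun n => by ring)]
  have : ∀ n : ℕ, (((n : ℝ) + 1) * ((n : ℝ) + (c + 1)) * t c (n + 1)) * z ^ n
      - (((n : ℝ) + c / 2) * ((n : ℝ) + (c + 1) / 2) * t c n) * z ^ n = 0 := fun n => by
    linear_combination z ^ n * t_rec hc n
  rw [tsum_congr this, tsum_zero]

section G

noncomputable def G (c : ℝ) : ℝ → ℝ := fun z => ((1 + Real.sqrt (1 - z)) / 2) ^ (-c)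

noncomputable def Gd (c : ℝ) : ℝ → ℝ :=
  fun z => c / 4 * (Real.sqrt (1 - z))⁻¹ * ((1 + Real.sqrt (1 - z)) / 2) ^ (-c - 1)

noncomputable def Gdd (c : ℝ) : ℝ → ℝ :=
  fun z => c / 4 * (1 / (2 * Real.sqrt (1 - z)) / Real.sqrt (1 - z) ^ 2) *
      ((1 + Real.sqrt (1 - z)) / 2) ^ (-c - 1)
    + c / 4 * (Real.sqrt (1 - z))⁻¹ *
      ((-c - 1) * ((1 + Real.sqrt (1 - z)) / 2) ^ (-c - 2) * (-(1 / (2 * Real.sqrt (1 - z))) / 2))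

omit hc in
lemma hasDerivAt_s {z : ℝ} (hz : z < 1) :
    HasDerivAt (fun z : ℝ => Real.sqrt (1 - z)) (-(1 / (2 * Real.sqrt (1 - z)))) z := by
  have h : (1 : ℝ) - z ≠ 0 := by linarith
  have h2 : HasDerivAt (fun z : ℝ => 1 - z) (-1) z := by
    simpa using (hasDerivAt_id z).const_sub 1
  have := (Real.hasDerivAt_sqrt h).comp z h2
  exact this.congr_deriv (by ring)

omit hc in
lemma hasDerivAt_p {z : ℝ} (hz : z < 1) :
    HasDerivAt (fun z : ℝ => (1 + Real.sqrt (1 - z)) / 2)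
      (-(1 / (2 * Real.sqrt (1 - z))) / 2) z :=
  ((hasDerivAt_s hz).const_add 1).div_const 2

omit hc in
lemma sp_pos {z : ℝ} (hz : z < 1) :
    0 < Real.sqrt (1 - z) ∧ 0 < (1 + Real.sqrt (1 - z)) / 2 := by
  have h1 : 0 < Real.sqrt (1 - z) := Real.sqrt_pos.2 (by linarith)
  exact ⟨h1, by positivity⟩

omit hc in
lemma hasDerivAt_G {z : ℝ} (hz : z < 1) : HasDerivAt (G c) (Gd c z) z := by
  obtain ⟨hs0, hp0⟩ := sp_pos hz
  have h := (Real.hasDerivAt_rpow_const (p := -c) (Or.inl hp0.ne')).comp z (hasDerivAt_p hz)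
  have e : -c * ((1 + Real.sqrt (1 - z)) / 2) ^ (-c - 1) * (-(1 / (2 * Real.sqrt (1 - z))) / 2)
      = Gd c z := by
    rw [Gd]
    ring
  rw [e] at h
  exact h

omit hc in
lemma hasDerivAt_Gd {z : ℝ} (hz : z < 1) : HasDerivAt (Gd c) (Gdd c z) z := by
  obtain ⟨hs0, hp0⟩ := sp_pos hz
  have hu : HasDerivAt (fun z : ℝ => c / 4 * (Real.sqrt (1 - z))⁻¹)
      (c / 4 * (1 / (2 * Real.sqrt (1 - z)) / Real.sqrt (1 - z) ^ 2)) z := by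
    have h := ((hasDerivAt_s hz).inv hs0.ne').const_mul (c / 4)
    exact h.congr_deriv (by ring)
  have hv : HasDerivAt (fun z : ℝ => ((1 + Real.sqrt (1 - z)) / 2) ^ (-c - 1))
      ((-c - 1) * ((1 + Real.sqrt (1 - z)) / 2) ^ (-c - 2) * (-(1 / (2 * Real.sqrt (1 - z))) / 2))
      z := by
    have h := (Real.hasDerivAt_rpow_const (p := -c - 1) (Or.inl hp0.ne')).comp z
      (hasDerivAt_p hz)
    rw [show (-c - 1 - 1 : ℝ) = -c - 2 by ring] at h
    exact h
  have h := hu.mul hv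
  exact h

omit hc in
lemma ode_G_algebra (z s p K2 : ℝ) (hs0 : 0 < s) (hs2 : s ^ 2 = 1 - z) (hp : p = (1 + s) / 2) :
    z * (1 - z) * (c / 4 * (1 / (2 * s) / s ^ 2) * (K2 * p)
        + c / 4 * s⁻¹ * ((-c - 1) * K2 * (-(1 / (2 * s)) / 2)))
      + ((c + 1) - (c + 3 / 2) * z) * (c / 4 * s⁻¹ * (K2 * p))
      - c / 2 * ((c + 1) / 2) * (K2 * p ^ 2) = 0 := by
  have hz : z = 1 - s ^ 2 := by linarith
  subst hz hp
  field_simp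
  ring

omit hc in
lemma ode_G {z : ℝ} (hz : z < 1) :
    z * (1 - z) * Gdd c z + ((c + 1) - (c + 3 / 2) * z) * Gd c z
      - c / 2 * ((c + 1) / 2) * G c z = 0 := by
  obtain ⟨hs0, hp0⟩ := sp_pos hz
  have hs2 : Real.sqrt (1 - z) ^ 2 = 1 - z := Real.sq_sqrt (by linarith)
  have e1 : ((1 + Real.sqrt (1 - z)) / 2) ^ (-c)
      = ((1 + Real.sqrt (1 - z)) / 2) ^ (-c - 2) * ((1 + Real.sqrt (1 - z)) / 2) ^ 2 := by
    have h2 : ((1 + Real.sqrt (1 - z)) / 2 : ℝ) ^ ((2 : ℕ) : ℝ)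
        = ((1 + Real.sqrt (1 - z)) / 2) ^ (2 : ℕ) := Real.rpow_natCast _ 2
    rw [← h2, ← Real.rpow_add hp0]
    norm_num
  have e2 : ((1 + Real.sqrt (1 - z)) / 2) ^ (-c - 1)
      = ((1 + Real.sqrt (1 - z)) / 2) ^ (-c - 2) * ((1 + Real.sqrt (1 - z)) / 2) := by
    rw [show (-c - 1 : ℝ) = (-c - 2) + 1 by ring, Real.rpow_add_one hp0.ne']
  simp only [G, Gd, Gdd]
  rw [e1, e2]
  have := ode_G_algebra (c := c) z (Real.sqrt (1 - z)) ((1 + Real.sqrt (1 - z)) / 2)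
    (((1 + Real.sqrt (1 - z)) / 2) ^ (-c - 2)) hs0 hs2 rfl
  linear_combination this

end G

section Wronskian

noncomputable def W (c : ℝ) : ℝ → ℝ := fun z => F c z * Gd c z - Fd c z * G c z

noncomputable def Phi (c : ℝ) : ℝ → ℝ :=
  fun z => z ^ (c + 1) * Real.sqrt (1 - z) * W c z

lemma hasDerivAt_W {z : ℝ} (hz : z ∈ Set.Ioo (-1 : ℝ) 1) :
    HasDerivAt (W c) (F c z * Gdd c z - Fdd c z * G c z) z := by
  have h1 := (hasDerivAt_F hc hz).mul (hasDerivAt_Gd (c := c) hz.2)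
  have h2 := (hasDerivAt_Fd hc hz).mul (hasDerivAt_G (c := c) hz.2)
  have h := h1.sub h2
  have e : Fd c z * Gd c z + F c z * Gdd c z - (Fdd c z * G c z + Fd c z * Gd c z)
      = F c z * Gdd c z - Fdd c z * G c z := by ring
  rw [e] at h
  exact h

omit hc in
lemma phi_algebra (z s A Wv D : ℝ) (h0 : 0 < z) (hz1 : z < 1) (hs0 : 0 < s)
    (hs2 : s ^ 2 = 1 - z)
    (h1 : z * (1 - z) * D = -((c + 1) - (c + 3 / 2) * z) * Wv) :
    ((c + 1) * A * s + A * z * (-(1 / (2 * s)))) * Wv + A * z * s * D = 0 := by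
  have hz2 : (0 : ℝ) < 1 - z := by linarith
  have hD : D = -((c + 1) - (c + 3 / 2) * z) * Wv / (z * (1 - z)) := by
    rw [eq_div_iff (mul_pos h0 hz2).ne']
    linear_combination h1
  rw [hD]
  have hzz : z = 1 - s ^ 2 := by linarith
  subst hzz
  field_simp
  ring

lemma hasDerivAt_Phi {z : ℝ} (hz0 : 0 ≤ z) (hz1 : z < 1) : HasDerivAt (Phi c) 0 z := by
  have hz1' : z ∈ Set.Ioo (-1 : ℝ) 1 := ⟨by linarith, hz1⟩
  obtain ⟨hs0, hp0⟩ := sp_pos hz1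
  have hM : HasDerivAt (fun z : ℝ => z ^ (c + 1) * Real.sqrt (1 - z))
      ((c + 1) * z ^ c * Real.sqrt (1 - z) + z ^ (c + 1) * (-(1 / (2 * Real.sqrt (1 - z))))) z := by
    have h1 : HasDerivAt (fun z : ℝ => z ^ (c + 1)) ((c + 1) * z ^ c) z := by
      have := Real.hasDerivAt_rpow_const (x := z) (p := c + 1) (Or.inr (by linarith))
      rwa [show c + 1 - 1 = c by ring] at this
    exact h1.mul (hasDerivAt_s hz1)
  have h := hM.mul (hasDerivAt_W hc hz1')
  rcases eq_or_lt_of_le hz0 with h0 | h0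
  · have e : ((c + 1) * z ^ c * Real.sqrt (1 - z) + z ^ (c + 1) * (-(1 / (2 * Real.sqrt (1 - z)))))
        * W c z + z ^ (c + 1) * Real.sqrt (1 - z) * (F c z * Gdd c z - Fdd c z * G c z) = 0 := by
      rw [← h0, Real.zero_rpow hc.ne', Real.zero_rpow (by positivity : c + 1 ≠ 0)]
      ring
    rw [e] at h
    exact h
  · have hzz : z * (1 - z) * (F c z * Gdd c z - Fdd c z * G c z)
        = -((c + 1) - (c + 3 / 2) * z) * W c z := by
      have hf := ode_F hc h0 hz1
      have hg := ode_G (c := c) hz1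
      rw [W]
      linear_combination F c z * hg - G c z * hf
    have e : ((c + 1) * z ^ c * Real.sqrt (1 - z) + z ^ (c + 1) * (-(1 / (2 * Real.sqrt (1 - z)))))
        * W c z + z ^ (c + 1) * Real.sqrt (1 - z) * (F c z * Gdd c z - Fdd c z * G c z) = 0 := by
      rw [Real.rpow_add_one h0.ne' c]
      have := phi_algebra (c := c) z (Real.sqrt (1 - z)) (z ^ c) (W c z)
        (F c z * Gdd c z - Fdd c z * G c z) h0 hz1 hs0 (Real.sq_sqrt (by linarith)) hzz
      linear_combination this
    rw [e] at h
    exact h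

lemma W_eq_zero {x : ℝ} (hx : x ∈ Set.Ioo (0 : ℝ) 1) : W c x = 0 := by
  have hconst := constant_of_has_deriv_right_zero (f := Phi c) (a := 0) (b := x)
    (fun y hy => (hasDerivAt_Phi hc hy.1 (lt_of_le_of_lt hy.2 hx.2)).continuousAt.continuousWithinAt)
    (fun y hy => (hasDerivAt_Phi hc hy.1 (lt_of_lt_of_le hy.2 hx.2.le)).hasDerivWithinAt)
  have h := hconst x (Set.mem_Icc.2 ⟨hx.1.le, le_refl x⟩)
  have h0 : Phi c 0 = 0 := by
    rw [Phi, Real.zero_rpow (by positivity : c + 1 ≠ 0)]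
    ring
  rw [h0, Phi] at h
  have hx1 : (0 : ℝ) < x ^ (c + 1) := Real.rpow_pos_of_pos hx.1 _
  have hs : 0 < Real.sqrt (1 - x) := Real.sqrt_pos.2 (by linarith [hx.2])
  rcases mul_eq_zero.1 h with h' | h'
  · rcases mul_eq_zero.1 h' with h'' | h''
    · exact absurd h'' hx1.ne'
    · exact absurd h'' hs.ne'
  · exact h'

lemma W_zero_at_zero : W c 0 = 0 := by
  have hW : ContinuousAt (W c) 0 :=
    (hasDerivAt_W hc ⟨by norm_num, by norm_num⟩).continuousAt
  have hseq : Filter.Tendsto (fun n : ℕ => ((1 : ℝ) / 2) ^ (n + 1)) atTop (nhds 0) :=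
    (tendsto_pow_atTop_nhds_zero_of_lt_one (by norm_num) (by norm_num)).comp
      (tendsto_add_atTop_nat 1)
  have h1 : Filter.Tendsto (fun n : ℕ => W c (((1 : ℝ) / 2) ^ (n + 1))) atTop (nhds (W c 0)) :=
    (hW.tendsto).comp hseq
  have h2 : Filter.Tendsto (fun n : ℕ => W c (((1 : ℝ) / 2) ^ (n + 1))) atTop (nhds 0) := by
    refine tendsto_const_nhds.congr fun n => ?_
    rw [W_eq_zero hc ⟨by positivity, ?_⟩]
    exact pow_lt_one₀ (by norm_num) (by norm_num) (Nat.succ_ne_zero n)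
  exact tendsto_nhds_unique h1 h2

omit hc in
lemma G_pos (z : ℝ) : 0 < G c z := by
  have : (0 : ℝ) < (1 + Real.sqrt (1 - z)) / 2 := by
    have := Real.sqrt_nonneg (1 - z)
    linarith
  exact Real.rpow_pos_of_pos this _

lemma F_zero : F c 0 = 1 := by
  rw [F]
  rw [tsum_eq_single 0 (fun n hn => by simp [zero_pow hn])]
  simp [t_zero hc]

omit hc in
lemma G_zero : G c 0 = 1 := by
  rw [G]
  norm_num

lemma F_eq_G {x : ℝ} (hx : x ∈ Set.Ioo (0 : ℝ) 1) : F c x = G c x := by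
  have hconst := constant_of_has_deriv_right_zero (f := fun z => F c z / G c z) (a := 0) (b := x)
    ?_ ?_
  · have h := hconst x (Set.mem_Icc.2 ⟨hx.1.le, le_refl x⟩)
    rw [F_zero hc, G_zero, div_one] at h
    have := G_pos (c := c) x
    field_simp at h
    exact h
  · intro y hy
    have hy1 : y < 1 := lt_of_le_of_lt hy.2 hx.2
    have hy' : y ∈ Set.Ioo (-1 : ℝ) 1 := ⟨by linarith [hy.1], hy1⟩
    exact (((hasDerivAt_F hc hy').div (hasDerivAt_G hy1)
      (G_pos (c := c) y).ne')).continuousAt.continuousWithinAt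
  · intro y hy
    have hy1 : y < 1 := lt_of_lt_of_le hy.2 hx.2.le
    have hy' : y ∈ Set.Ioo (-1 : ℝ) 1 := ⟨by linarith [hy.1], hy1⟩
    have h := (hasDerivAt_F hc hy').div (hasDerivAt_G hy1) (G_pos (c := c) y).ne'
    have hW : Fd c y * G c y - F c y * Gd c y = 0 := by
      rcases eq_or_lt_of_le hy.1 with h0 | h0
      · have := W_zero_at_zero hc
        rw [W] at this
        rw [← h0]
        linarith [this]
      · have := W_eq_zero hc ⟨h0, hy1⟩
        rw [W] at this
        linarith [this]
    rw [hW, zero_div] at h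
    exact h.hasDerivWithinAt

end Wronskian

section Value

omit hc in
lemma half_rpow_neg : ((1 : ℝ) / 2) ^ (-c) = 2 ^ c := by
  rw [show (1 : ℝ) / 2 = 2⁻¹ by norm_num, ← Real.rpow_neg_one 2,
    ← Real.rpow_mul (by norm_num : (0:ℝ) ≤ 2)]
  norm_num

lemma G_le (z : ℝ) : G c z ≤ 2 ^ c := by
  have hs := Real.sqrt_nonneg (1 - z)
  have h1 : (0 : ℝ) < 1 / 2 := by norm_num
  have h2 : (1 : ℝ) / 2 ≤ (1 + Real.sqrt (1 - z)) / 2 := by linarith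
  have h3 := Real.rpow_le_rpow_of_nonpos h1 h2 (neg_nonpos.2 hc.le)
  calc G c z ≤ ((1 : ℝ) / 2) ^ (-c) := h3
    _ = 2 ^ c := half_rpow_neg

omit hc in
lemma G_tendsto_one : Filter.Tendsto (G c) (nhdsWithin 1 (Set.Iio 1)) (nhds (2 ^ c)) := by
  have hcont : ContinuousAt (G c) 1 := by
    have hbase : Continuous fun z : ℝ => (1 + Real.sqrt (1 - z)) / 2 :=
      ((continuous_const.add (Real.continuous_sqrt.comp (continuous_const.sub continuous_id)))
        ).div_const 2
    have h : ContinuousAt (fun x : ℝ => x ^ (-c)) ((1 + Real.sqrt (1 - 1)) / 2) := by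
      apply Real.continuousAt_rpow_const
      left
      norm_num
    exact ContinuousAt.comp (g := fun x : ℝ => x ^ (-c)) h hbase.continuousAt
  have hval : G c 1 = 2 ^ c := by
    rw [G, show (1 : ℝ) - 1 = 0 by norm_num, Real.sqrt_zero,
      show ((1 : ℝ) + 0) / 2 = 1 / 2 by norm_num, half_rpow_neg]
  rw [← hval]
  exact hcont.continuousWithinAt.tendsto

lemma summable_t : Summable (t c) := by
  refine summable_of_sum_range_le (c := (2:ℝ) ^ c) (fun n => (t_pos hc n).le) fun N => ?_
  have hpoly : Filter.Tendsto (fun z : ℝ => ∑ i ∈ Finset.range N, t c i * z ^ i)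
      (nhdsWithin 1 (Set.Iio 1)) (nhds (∑ i ∈ Finset.range N, t c i)) := by
    have hcont : Continuous fun z : ℝ => ∑ i ∈ Finset.range N, t c i * z ^ i :=
      continuous_finset_sum _ fun i _ => continuous_const.mul (continuous_pow i)
    have h' : Filter.Tendsto (fun z : ℝ => ∑ i ∈ Finset.range N, t c i * z ^ i)
        (nhdsWithin 1 (Set.Iio 1)) (nhds (∑ i ∈ Finset.range N, t c i * 1 ^ i)) :=
      ((hcont.continuousAt (x := (1 : ℝ))).continuousWithinAt (s := Set.Iio 1)).tendsto
    simpa using h'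
  refine le_of_tendsto hpoly ?_
  filter_upwards [Ioo_mem_nhdsLT_of_mem (Set.mem_Ioc.2 ⟨zero_lt_one, le_refl (1:ℝ)⟩)] with z hz
  calc ∑ i ∈ Finset.range N, t c i * z ^ i
      ≤ F c z := Summable.sum_le_tsum _ (fun i _ => by
        have := (t_pos hc i).le
        have := (pow_pos hz.1 i).le
        positivity) (summable_F hc hz.1 hz.2)
    _ = G c z := F_eq_G hc hz
    _ ≤ 2 ^ c := G_le (c := c) hc z

lemma tsum_t : ∑' n, t c n = 2 ^ c := by
  have hsum := summable_t hc
  refine le_antisymm ?_ ?_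
  · refine Real.tsum_le_of_sum_range_le (fun n => (t_pos hc n).le) fun N => ?_
    have hpoly : Filter.Tendsto (fun z : ℝ => ∑ i ∈ Finset.range N, t c i * z ^ i)
        (nhdsWithin 1 (Set.Iio 1)) (nhds (∑ i ∈ Finset.range N, t c i)) := by
      have hcont : Continuous fun z : ℝ => ∑ i ∈ Finset.range N, t c i * z ^ i :=
        continuous_finset_sum _ fun i _ => continuous_const.mul (continuous_pow i)
      have h' : Filter.Tendsto (fun z : ℝ => ∑ i ∈ Finset.range N, t c i * z ^ i)
          (nhdsWithin 1 (Set.Iio 1)) (nhds (∑ i ∈ Finset.range N, t c i * 1 ^ i)) :=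
        ((hcont.continuousAt (x := (1 : ℝ))).continuousWithinAt (s := Set.Iio 1)).tendsto
      simpa using h'
    refine le_of_tendsto hpoly ?_
    filter_upwards [Ioo_mem_nhdsLT_of_mem (Set.mem_Ioc.2 ⟨zero_lt_one, le_refl (1:ℝ)⟩)] with z hz
    calc ∑ i ∈ Finset.range N, t c i * z ^ i
        ≤ F c z := Summable.sum_le_tsum _ (fun i _ => by
          have := (t_pos hc i).le
          have := (pow_pos hz.1 i).le
          positivity) (summable_F hc hz.1 hz.2)
      _ = G c z := F_eq_G hc hz
      _ ≤ 2 ^ c := G_le (c := c) hc z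
  · refine le_of_tendsto (G_tendsto_one (c := c)) ?_
    filter_upwards [Ioo_mem_nhdsLT_of_mem (Set.mem_Ioc.2 ⟨zero_lt_one, le_refl (1:ℝ)⟩)] with z hz
    calc G c z = F c z := (F_eq_G hc hz).symm
      _ ≤ ∑' n, t c n := by
        refine Summable.tsum_le_tsum (fun n => ?_) (summable_F hc hz.1 hz.2) hsum
        have ht := (t_pos hc n).le
        have h1 : z ^ n ≤ 1 := pow_le_one₀ hz.1.le hz.2.le
        nlinarith [ht]

lemma F_one : F c 1 = 2 ^ c := by
  rw [F]
  simp only [one_pow, mul_one]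
  exact tsum_t hc

lemma main2 {u : ℝ} (hu0 : 0 ≤ u) (hu1 : u ≤ 1) :
    (2 : ℝ) ^ (-c) * u ^ c * F c u = (1 - Real.sqrt (1 - u)) ^ c := by
  rcases eq_or_lt_of_le hu0 with h0 | h0
  · rw [← h0, Real.zero_rpow hc.ne', show (1 : ℝ) - 0 = 1 by norm_num, Real.sqrt_one,
      show (1 : ℝ) - 1 = 0 by norm_num, Real.zero_rpow hc.ne']
    ring
  rcases eq_or_lt_of_le hu1 with h1 | h1
  · subst h1
    rw [F_one hc, Real.one_rpow, show (1 : ℝ) - 1 = 0 by norm_num, Real.sqrt_zero, sub_zero,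
      Real.one_rpow, Real.rpow_neg (by norm_num : (0 : ℝ) ≤ 2)]
    have h2c : (0 : ℝ) < 2 ^ c := Real.rpow_pos_of_pos (by norm_num) _
    field_simp
  · have hFG := F_eq_G hc ⟨h0, h1⟩
    rw [hFG, G]
    set s := Real.sqrt (1 - u) with hs
    have hs0 : 0 ≤ s := Real.sqrt_nonneg _
    have hs2 : s ^ 2 = 1 - u := Real.sq_sqrt (by linarith)
    have h1s : (0 : ℝ) < 1 + s := by linarith
    have key : u / (1 + s) = 1 - s := by
      rw [div_eq_iff h1s.ne']
      linear_combination hs2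
    have e1 : (2 : ℝ) ^ (-c) * ((1 + s) / 2) ^ (-c) = (1 + s) ^ (-c) := by
      rw [← Real.mul_rpow (by norm_num) (by positivity),
        show (2 : ℝ) * ((1 + s) / 2) = 1 + s by ring]
    have e2 : u ^ c * (1 + s) ^ (-c) = (u / (1 + s)) ^ c := by
      rw [Real.rpow_neg h1s.le, Real.div_rpow h0.le h1s.le]
      ring
    calc (2 : ℝ) ^ (-c) * u ^ c * ((1 + s) / 2) ^ (-c)
        = u ^ c * ((2 : ℝ) ^ (-c) * ((1 + s) / 2) ^ (-c)) := by ring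
      _ = u ^ c * (1 + s) ^ (-c) := by rw [e1]
      _ = (u / (1 + s)) ^ c := e2
      _ = (1 - s) ^ c := by rw [key]

lemma prefactor : Real.Gamma ((c + 1) / 2) * Real.Gamma (c / 2 + 1)
    / (Real.Gamma (c + 1) * Real.Gamma (1 / 2)) = 2 ^ (-c) := by
  have h := Real.Gamma_mul_Gamma_add_half ((c + 1) / 2)
  rw [show (c + 1) / 2 + 1 / 2 = c / 2 + 1 by ring, show 2 * ((c + 1) / 2) = c + 1 by ring,
    show 1 - (c + 1) = -c by ring] at h
  rw [h, Real.Gamma_one_half_eq]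
  have hG : 0 < Real.Gamma (c + 1) := Real.Gamma_pos_of_pos (by linarith)
  have hpi : 0 < Real.sqrt π := Real.sqrt_pos.2 Real.pi_pos
  field_simp

end Value

end AskeyAux

lemma hyp2F1_eq_F (c x : ℝ) : hyp2F1 (c / 2) ((c + 1) / 2) (c + 1) x = AskeyAux.F c x := by
  rw [hyp2F1, AskeyAux.F]
  exact tsum_congr fun n => by rw [AskeyAux.t]; ring

/-- The Askey function coincides with the Gauss hypergeometric covariance with
α = (d+1)/2, β = (d+ℓ+1)/2, γ = (d+ℓ)/2+1. -/
theorem askey_eq_gaussHypergeometric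
    (d : ℕ) (hd : 1 ≤ d) (ℓ : ℝ) (hℓ : ((d : ℝ) + 1) / 2 ≤ ℓ) (a : ℝ) (ha : 0 < a) :
    (∀ h : EuclideanSpace ℝ (Fin d),
      gaussHypCov d a (((d : ℝ) + 1) / 2) (((d : ℝ) + ℓ + 1) / 2) (((d : ℝ) + ℓ) / 2 + 1) h =
        (max (1 - ‖h‖ / a) 0) ^ ℓ) ∧
    (∀ u ∈ Set.Icc (0 : ℝ) 1,
      (Real.Gamma (((d : ℝ) + ℓ + 1) / 2 - (d : ℝ) / 2) *
          Real.Gamma (((d : ℝ) + ℓ) / 2 + 1 - (d : ℝ) / 2) /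
          (Real.Gamma (((d : ℝ) + ℓ + 1) / 2 - ((d : ℝ) + 1) / 2 + (((d : ℝ) + ℓ) / 2 + 1) -
              (d : ℝ) / 2) *
            Real.Gamma (((d : ℝ) + 1) / 2 - (d : ℝ) / 2))) *
        u ^ (((d : ℝ) + ℓ + 1) / 2 - ((d : ℝ) + 1) / 2 + (((d : ℝ) + ℓ) / 2 + 1) -
              (d : ℝ) / 2 - 1) *
        hyp2F1 (((d : ℝ) + ℓ + 1) / 2 - ((d : ℝ) + 1) / 2)
          ((((d : ℝ) + ℓ) / 2 + 1) - ((d : ℝ) + 1) / 2)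
          (((d : ℝ) + ℓ + 1) / 2 - ((d : ℝ) + 1) / 2 + (((d : ℝ) + ℓ) / 2 + 1) - (d : ℝ) / 2)
          u =
        (1 - Real.sqrt (1 - u)) ^ ℓ) := by
  have hd1 : (1 : ℝ) ≤ (d : ℝ) := by exact_mod_cast hd
  have hc : 0 < ℓ := by linarith
  have r5 : ((d : ℝ) + ℓ + 1) / 2 - ((d : ℝ) + 1) / 2 + (((d : ℝ) + ℓ) / 2 + 1) -
      (d : ℝ) / 2 - 1 = ℓ := by ring
  have r3 : ((d : ℝ) + ℓ + 1) / 2 - ((d : ℝ) + 1) / 2 + (((d : ℝ) + ℓ) / 2 + 1) -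
      (d : ℝ) / 2 = ℓ + 1 := by ring
  have r1 : ((d : ℝ) + ℓ + 1) / 2 - (d : ℝ) / 2 = (ℓ + 1) / 2 := by ring
  have r2 : ((d : ℝ) + ℓ) / 2 + 1 - (d : ℝ) / 2 = ℓ / 2 + 1 := by ring
  have r4 : ((d : ℝ) + 1) / 2 - (d : ℝ) / 2 = 1 / 2 := by ring
  have r6 : ((d : ℝ) + ℓ + 1) / 2 - ((d : ℝ) + 1) / 2 = ℓ / 2 := by ring
  have r7 : (((d : ℝ) + ℓ) / 2 + 1) - ((d : ℝ) + 1) / 2 = (ℓ + 1) / 2 := by ring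
  constructor
  · intro h
    rw [gaussHypCov, r5, r3, r1, r2, r4, r6, r7]
    have hx0 : 0 ≤ ‖h‖ := norm_nonneg h
    by_cases hxa : ‖h‖ < a
    · have hu0 : 0 ≤ 1 - ‖h‖ ^ 2 / a ^ 2 := by
        have h2 : ‖h‖ ^ 2 < a ^ 2 := by nlinarith
        have h3 : ‖h‖ ^ 2 / a ^ 2 < 1 := by
          rw [div_lt_one (by positivity)]
          exact h2
        linarith
      have hu1 : 1 - ‖h‖ ^ 2 / a ^ 2 ≤ 1 := by
        have : 0 ≤ ‖h‖ ^ 2 / a ^ 2 := by positivity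
        linarith
      rw [max_eq_left hu0, hyp2F1_eq_F, AskeyAux.prefactor hc, AskeyAux.main2 hc hu0 hu1]
      have hsq : Real.sqrt (1 - (1 - ‖h‖ ^ 2 / a ^ 2)) = ‖h‖ / a := by
        rw [show 1 - (1 - ‖h‖ ^ 2 / a ^ 2) = (‖h‖ / a) ^ 2 by rw [div_pow]; ring,
          Real.sqrt_sq (by positivity)]
      rw [hsq, max_eq_left]
      have : ‖h‖ / a < 1 := (div_lt_one ha).2 hxa
      linarith
    · push_neg at hxa
      have hmax0 : max (1 - ‖h‖ ^ 2 / a ^ 2) 0 = 0 := by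
        refine max_eq_right ?_
        have h2 : a ^ 2 ≤ ‖h‖ ^ 2 := by nlinarith
        have h3 : (1 : ℝ) ≤ ‖h‖ ^ 2 / a ^ 2 := (one_le_div (by positivity)).2 h2
        linarith
      have hmax1 : max (1 - ‖h‖ / a) 0 = 0 := by
        refine max_eq_right ?_
        have h3 : (1 : ℝ) ≤ ‖h‖ / a := (one_le_div ha).2 hxa
        linarith
      rw [hmax0, hmax1, Real.zero_rpow hc.ne']
      ring
  · intro u hu
    rw [r5, r3, r1, r2, r4, r6, r7, hyp2F1_eq_F, AskeyAux.prefactor hc]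
    exact AskeyAux.main2 hc hu.1 hu.2
end

section
/- Let q ∈ ℕ. A (q+2)-times monotone function φ on ℝ₊ admits a representation φ(x) = ∫₀^∞ (1 - tx)₊^{q+1} ν(dt) for some nonnegative measure ν on ℝ₊. -/
open Real Set MeasureTheory

open Filter Topology ENNReal Function


lemma tail_lintegral (g D : ℝ → ℝ) (x L : ℝ)
    (hftc : ∀ y, x ≤ y → ∫ s in x..y, D s = g y - g x)
    (hint : ∀ y, x ≤ y → IntervalIntegrable D volume x y)
    (hDneg : ∀ s, x < s → D s ≤ 0)
    (hgL : Tendsto g atTop (𝓝 L)) :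
    ∫⁻ s in Ioi x, ENNReal.ofReal (-(D s)) = ENNReal.ofReal (g x - L) := by
  set f : ℝ → ℝ≥0∞ := fun s => ENNReal.ofReal (-(D s)) with hf
  have hIntOn : ∀ y, x ≤ y → IntegrableOn (fun s => -(D s)) (Ioc x y) volume := fun y hy =>
    ((intervalIntegrable_iff_integrableOn_Ioc_of_le hy).1 (hint y hy)).neg
  have hpart : ∀ y, x ≤ y → ∫⁻ s in Ioc x y, f s = ENNReal.ofReal (g x - g y) := by
    intro y hy
    have hnn : 0 ≤ᵐ[volume.restrict (Ioc x y)] fun s => -(D s) := by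
      filter_upwards [ae_restrict_mem measurableSet_Ioc] with s hs
      simpa using hDneg s hs.1
    rw [hf, ← ofReal_integral_eq_lintegral_ofReal (hIntOn y hy) hnn]
    congr 1
    have h1 : ∫ s in Ioc x y, -(D s) = -∫ s in Ioc x y, D s := by
      simpa using integral_neg (f := fun s => D s) (μ := volume.restrict (Ioc x y))
    rw [h1, ← intervalIntegral.integral_of_le hy, hftc y hy]; ring
  set a : ℕ → ℝ≥0∞ := fun n => ∫⁻ s in Ioc x (x + (n + 1 : ℕ)), f s with ha
  have hax : ∀ n : ℕ, x ≤ x + (n + 1 : ℕ) := fun n => le_add_of_nonneg_right (by positivity)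
  have hamono : Monotone a := by
    intro m n hmn
    have : ((m:ℝ)+1) ≤ (n:ℝ)+1 := by have := (Nat.cast_le (α := ℝ)).2 hmn; linarith
    apply lintegral_mono' (Measure.restrict_mono (Ioc_subset_Ioc le_rfl (by push_cast; linarith)) le_rfl) le_rfl
  have hatend : Tendsto a atTop (𝓝 (ENNReal.ofReal (g x - L))) := by
    have h1 : Tendsto (fun n : ℕ => g x - g (x + (n + 1 : ℕ))) atTop (𝓝 (g x - L)) := by
      apply Tendsto.const_sub
      apply hgL.comp
      apply tendsto_atTop_add_const_left
      exact_mod_cast (tendsto_natCast_atTop_atTop (R := ℝ)).comp (tendsto_add_atTop_nat 1)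
    have := ENNReal.tendsto_ofReal h1
    simpa only [ha, fun n => hpart _ (hax n)] using this
  have hsup : ∫⁻ s in Ioi x, f s = ⨆ n, a n := by
    have key : ∫⁻ s in Ioi x, f s = ∫⁻ s, ⨆ n : ℕ, (Ioc x (x + (n + 1 : ℕ))).indicator f s := by
      rw [← lintegral_indicator measurableSet_Ioi]
      apply lintegral_congr
      intro s
      rcases le_or_gt s x with h | h
      · rw [indicator_of_notMem (by simpa using h)]
        symm
        simp only [ENNReal.iSup_eq_zero]
        intro n
        rw [indicator_of_notMem]
        simp only [mem_Ioc, not_and_or]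
        exact Or.inl (by simpa using h)
      · obtain ⟨n, hn⟩ := exists_nat_ge (s - x)
        rw [indicator_of_mem (show s ∈ Ioi x from h)]
        apply le_antisymm
        · refine le_iSup_of_le n ?_
          have hms : s ∈ Ioc x (x + ((n + 1 : ℕ) : ℝ)) := ⟨h, by push_cast; linarith⟩
          rw [indicator_of_mem hms]
        · refine iSup_le fun m => ?_
          by_cases hm : s ∈ Ioc x (x + (m + 1 : ℕ))
          · rw [indicator_of_mem hm]
          · rw [indicator_of_notMem hm]; exact zero_le
    rw [key, lintegral_iSup']
    · apply iSup_congr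
      intro n
      rw [lintegral_indicator measurableSet_Ioc]
    · intro n
      rw [aemeasurable_indicator_iff measurableSet_Ioc]
      exact ENNReal.measurable_ofReal.comp_aemeasurable (hIntOn _ (hax n)).aemeasurable
    · apply ae_of_all
      intro s m n hmn
      have : ((m:ℝ)+1) ≤ (n:ℝ)+1 := by have := (Nat.cast_le (α := ℝ)).2 hmn; linarith
      apply indicator_le_indicator_of_subset (Ioc_subset_Ioc le_rfl (by push_cast; linarith))
      intro b; exact zero_le
  rw [hsup]
  exact tendsto_nhds_unique (tendsto_atTop_iSup hamono) hatend


lemma ofReal_max0 (a : ℝ) : ENNReal.ofReal (max a 0) = ENNReal.ofReal a := by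
  rcases le_total a 0 with h | h
  · rw [max_eq_right h, ENNReal.ofReal_zero, eq_comm, ENNReal.ofReal_eq_zero]; exact h
  · rw [max_eq_left h]

lemma base_rep (g : ℝ → ℝ) (hc : ContinuousOn g (Ici 0))
    (h0 : ∀ x ∈ Ici (0:ℝ), 0 ≤ g x) (ha : AntitoneOn g (Ici 0))
    (hcv : ConvexOn ℝ (Ici 0) g) :
    ∃ (c : ℝ≥0∞) (μ : Measure ℝ), SFinite μ ∧ μ (Iic 0) = 0 ∧
      ∀ x ∈ Ici (0:ℝ), ENNReal.ofReal (g x) =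
        c + ∫⁻ u, ENNReal.ofReal (max (u - x) 0) ∂μ := by
  -- the limit L of g at infinity
  have hne : (g '' Ici 0).Nonempty := ⟨g 0, mem_image_of_mem g self_mem_Ici⟩
  have hbdd : BddBelow (g '' Ici 0) := ⟨0, by rintro y ⟨x, hx, rfl⟩; exact h0 x hx⟩
  set L := sInf (g '' Ici 0) with hLdef
  have hL0 : 0 ≤ L := le_csInf hne (by rintro y ⟨x, hx, rfl⟩; exact h0 x hx)
  have hLle : ∀ x ∈ Ici (0:ℝ), L ≤ g x := fun x hx => csInf_le hbdd (mem_image_of_mem g hx)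
  have hgL : Tendsto g atTop (𝓝 L) := by
    rw [tendsto_order]
    constructor
    · intro b hb
      filter_upwards [eventually_ge_atTop (0:ℝ)] with y hy
      exact lt_of_lt_of_le hb (hLle y hy)
    · intro b hb
      obtain ⟨z, hz, hzb⟩ := exists_lt_of_csInf_lt hne hb
      obtain ⟨y0, hy0, rfl⟩ := hz
      filter_upwards [eventually_ge_atTop y0] with y hy
      exact lt_of_le_of_lt (ha hy0 (le_trans hy0 hy) hy) hzb
  -- the right derivative of g
  set Dr : ℝ → ℝ := fun s => sInf (slope g s '' Ioi s) with hDrdef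
  have hsl : ∀ s y : ℝ, slope g s y = (g y - g s) / (y - s) := fun s y => slope_def_field g s y
  have hslmono : ∀ s ∈ Ici (0:ℝ), MonotoneOn (slope g s) (Ioi s) := by
    intro s hs y hy z hz hyz
    rw [hsl, hsl]
    exact hcv.secant_mono hs (mem_Ici.2 (le_trans hs (le_of_lt hy))) (mem_Ici.2 (le_trans hs (le_of_lt hz)))
      (ne_of_gt hy) (ne_of_gt hz) hyz
  have hslb : ∀ s, 0 < s → ∀ y ∈ Ioi s, (g s - g 0) / s ≤ slope g s y := by
    intro s hs y hy
    have := hcv.slope_mono_adjacent self_mem_Ici (mem_Ici.2 (le_of_lt (lt_trans hs hy))) hs hy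
    rw [hsl]
    simpa using this
  have hbddb : ∀ s, 0 < s → BddBelow (slope g s '' Ioi s) := by
    intro s hs
    exact ⟨(g s - g 0) / s, by rintro z ⟨y, hy, rfl⟩; exact hslb s hs y hy⟩
  have hne' : ∀ s : ℝ, (slope g s '' Ioi s).Nonempty :=
    fun s => ⟨slope g s (s+1), mem_image_of_mem _ (by simp : s + 1 ∈ Ioi s)⟩
  have hDrle : ∀ s, 0 < s → ∀ y ∈ Ioi s, Dr s ≤ slope g s y :=
    fun s hs y hy => csInf_le (hbddb s hs) (mem_image_of_mem _ hy)
  have hDtend : ∀ s, 0 < s → Tendsto (slope g s) (𝓝[>] s) (𝓝 (Dr s)) :=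
    fun s hs => MonotoneOn.tendsto_nhdsGT (hslmono s (le_of_lt hs)) (hbddb s hs)
  have hDderiv : ∀ s, 0 < s → HasDerivWithinAt g (Dr s) (Ioi s) s := by
    intro s hs
    rw [hasDerivWithinAt_iff_tendsto_slope, diff_singleton_eq_self (notMem_Ioi.2 le_rfl)]
    exact hDtend s hs
  have hDrmono : MonotoneOn Dr (Ioi 0) := by
    intro s hs t ht hst
    rcases eq_or_lt_of_le hst with rfl | hst
    · exact le_rfl
    apply le_csInf (hne' t)
    rintro z ⟨y, hy, rfl⟩
    calc Dr s ≤ slope g s t := hDrle s hs t hst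
      _ ≤ slope g t y := by
          rw [hsl, hsl]
          exact hcv.slope_mono_adjacent (mem_Ici.2 (le_of_lt hs)) (mem_Ici.2 (le_of_lt (lt_trans ht hy))) hst hy
  have hDrnonpos : ∀ s, 0 < s → Dr s ≤ 0 := by
    intro s hs
    refine le_trans (hDrle s hs (s+1) (by simp)) ?_
    rw [hsl]
    simp only [add_sub_cancel_left, div_one]
    have hmem : s + 1 ∈ Ici (0:ℝ) := by simp only [mem_Ici]; linarith
    have := ha (le_of_lt hs) hmem (by linarith)
    linarith
  have hftc : ∀ p y : ℝ, 0 < p → p ≤ y → ∫ s in p..y, Dr s = g y - g p := by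
    intro p y hp hpy
    have hsub : Icc p y ⊆ Ici (0:ℝ) := fun z hz => le_trans (le_of_lt hp) hz.1
    apply intervalIntegral.integral_eq_sub_of_hasDeriv_right_of_le hpy (hc.mono hsub)
      (fun s hs => hDderiv s (lt_trans hp hs.1))
    apply MonotoneOn.intervalIntegrable
    apply hDrmono.mono
    rw [uIcc_of_le hpy]
    intro z hz; exact lt_of_lt_of_le hp hz.1
  have hint : ∀ p y : ℝ, 0 < p → p ≤ y → IntervalIntegrable Dr volume p y := by
    intro p y hp hpy
    apply MonotoneOn.intervalIntegrable
    apply hDrmono.mono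
    rw [uIcc_of_le hpy]
    intro z hz; exact lt_of_lt_of_le hp hz.1
  -- tail bound and limit of Dr at infinity
  have hDrtail : ∀ y : ℝ, 1 < y → (L - g 1) / (y - 1) ≤ Dr y := by
    intro y hy
    have h1y : (0:ℝ) < 1 := one_pos
    have hIy : ∫ s in (1:ℝ)..y, Dr s = g y - g 1 := hftc 1 y one_pos (le_of_lt hy)
    have hmono' : ∀ s ∈ Icc (1:ℝ) y, Dr s ≤ Dr y :=
      fun s hs => hDrmono (lt_of_lt_of_le one_pos hs.1) (lt_trans one_pos hy) hs.2
    have := intervalIntegral.integral_mono_on (le_of_lt hy) (hint 1 y one_pos (le_of_lt hy))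
      (intervalIntegrable_const (c := Dr y)) hmono'
    rw [hIy, intervalIntegral.integral_const, smul_eq_mul] at this
    have hy1 : (0:ℝ) < y - 1 := by linarith
    rw [div_le_iff₀ hy1]
    have hgyL : L ≤ g y := hLle y (le_of_lt (lt_trans one_pos hy))
    linarith
  have hDrtop : Tendsto Dr atTop (𝓝 0) := by
    apply tendsto_of_tendsto_of_tendsto_of_le_of_le' (g := fun y => (L - g 1)/(y - 1))
      (h := fun _ => (0:ℝ))
    · exact Tendsto.div_atTop tendsto_const_nhds (tendsto_atTop_add_const_right _ _ tendsto_id)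
    · exact tendsto_const_nhds
    · filter_upwards [eventually_gt_atTop (1:ℝ)] with y hy using hDrtail y hy
    · filter_upwards [eventually_gt_atTop (1:ℝ)] with y hy using hDrnonpos y (lt_trans one_pos hy)
  -- Stieltjes machinery via exp
  set E : ℝ → ℝ := fun t => Dr (exp t) with hEdef
  have hEmono : Monotone E := fun t₁ t₂ h => hDrmono (exp_pos t₁) (exp_pos t₂) (exp_le_exp.2 h)
  set m := hEmono.stieltjesFunction with hmdef
  have hmeq : ∀ t, m t = rightLim E t := fun t => rfl
  have hEtop : Tendsto E atTop (𝓝 0) := hDrtop.comp tendsto_exp_atTop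
  have hmtop : Tendsto (fun t => m t) atTop (𝓝 0) := by
    apply tendsto_of_tendsto_of_tendsto_of_le_of_le' hEtop (hEtop.comp (tendsto_atTop_add_const_right atTop 1 tendsto_id))
    · exact Eventually.of_forall (fun t => hEmono.le_rightLim le_rfl)
    · exact Eventually.of_forall (fun t => hEmono.rightLim_le (by linarith : t < t + 1))
  set μ : Measure ℝ := m.measure.map exp with hμdef
  have hSF : SFinite μ := by infer_instance
  have hμapp : ∀ {s : Set ℝ}, MeasurableSet s → μ s = m.measure (exp ⁻¹' s) :=
    fun hs => Measure.map_apply measurable_exp hs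
  have hμIic : μ (Iic 0) = 0 := by
    rw [hμapp measurableSet_Iic]
    convert measure_empty (μ := m.measure)
    ext t
    simp [not_le.2 (exp_pos t)]
  have hm_Ioi : ∀ t : ℝ, m.measure (Ioi t) = ENNReal.ofReal (-(m t)) := by
    intro t
    have h1 : Tendsto (fun y => m.measure (Ioc t y)) atTop (𝓝 (m.measure (Ioi t))) := by
      rw [← iUnion_Ioc_right]
      exact tendsto_measure_iUnion_atTop (antitone_const.Ioc monotone_id)
    refine tendsto_nhds_unique h1 ?_
    simp_rw [StieltjesFunction.measure_Ioc]
    have : Tendsto (fun y => (m y) - m t) atTop (𝓝 (0 - m t)) := Tendsto.sub_const hmtop _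
    simpa using ENNReal.tendsto_ofReal this
  have hμIoi : ∀ s : ℝ, 0 < s → μ (Ioi s) = ENNReal.ofReal (-(m (log s))) := by
    intro s hs
    rw [hμapp measurableSet_Ioi]
    have : exp ⁻¹' Ioi s = Ioi (log s) := by
      ext t
      simp only [mem_preimage, mem_Ioi]
      exact (Real.log_lt_iff_lt_exp hs).symm
    rw [this, hm_Ioi]
  -- measurable version of Dr on (0,∞)
  set DD : ℝ → ℝ := fun s => E (log s) with hDDdef
  have hDDeq : ∀ s : ℝ, 0 < s → DD s = Dr s := fun s hs => by
    simp only [hDDdef, hEdef, exp_log hs]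
  have hmain : ∀ x : ℝ, 0 < x → ENNReal.ofReal (g x) =
      ENNReal.ofReal L + ∫⁻ u, ENNReal.ofReal (max (u - x) 0) ∂μ := by
    intro x hx
    have hftcD : ∀ y, x ≤ y → ∫ s in x..y, DD s = g y - g x := by
      intro y hy
      rw [intervalIntegral.integral_congr (g := Dr) ?_]
      · exact hftc x y hx hy
      · intro z hz
        rw [uIcc_of_le hy] at hz
        exact hDDeq z (lt_of_lt_of_le hx hz.1)
    have hintD : ∀ y, x ≤ y → IntervalIntegrable DD volume x y := by
      intro y hy
      apply MonotoneOn.intervalIntegrable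
      intro z hz w hw hzw
      rw [uIcc_of_le hy] at hz hw
      have hz0 : 0 < z := lt_of_lt_of_le hx hz.1
      have hw0 : 0 < w := lt_of_lt_of_le hx hw.1
      rw [hDDeq z hz0, hDDeq w hw0]
      exact hDrmono hz0 hw0 hzw
    have hnegD : ∀ s, x < s → DD s ≤ 0 := fun s hs => by
      rw [hDDeq s (lt_trans hx hs)]; exact hDrnonpos s (lt_trans hx hs)
    have htail := tail_lintegral g DD x L hftcD hintD hnegD hgL
    have hbadc : ({t : ℝ | ¬ContinuousAt E t}).Countable := hEmono.countable_not_continuousAt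
    have hbad : volume (exp '' {t : ℝ | ¬ContinuousAt E t}) = 0 :=
      (hbadc.image _).measure_zero _
    have hae : ∀ᵐ s ∂(volume.restrict (Ioi x)), ENNReal.ofReal (-(DD s)) = μ (Ioi s) := by
      rw [ae_restrict_iff' measurableSet_Ioi]
      have h1 : ∀ᵐ s ∂(volume : Measure ℝ), s ∉ exp '' {t : ℝ | ¬ContinuousAt E t} := by
        rw [ae_iff]
        simp only [not_not, setOf_mem_eq]; exact hbad
      filter_upwards [h1] with s hs hsx
      have hspos : 0 < s := lt_trans hx hsx
      have hcont : ContinuousAt E (log s) := by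
        by_contra hnot
        exact hs ⟨log s, hnot, exp_log hspos⟩
      have hml : m (log s) = E (log s) :=
        rightLim_eq_of_tendsto
          (hcont.tendsto.mono_left nhdsWithin_le_nhds)
      rw [hμIoi s hspos, hml]
    have hstep2 : ∫⁻ s in Ioi x, ENNReal.ofReal (-(DD s)) = ∫⁻ s in Ioi x, μ (Ioi s) :=
      lintegral_congr_ae hae
    have hswap : ∫⁻ s in Ioi x, μ (Ioi s) = ∫⁻ u, ENNReal.ofReal (max (u - x) 0) ∂μ := by
      have hFmeas : Measurable (Function.uncurry (fun s u : ℝ => if s < u then (1:ℝ≥0∞) else 0)) := by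
        apply Measurable.ite (measurableSet_lt measurable_fst measurable_snd) <;>
          exact measurable_const
      have h1 : ∀ s : ℝ, μ (Ioi s) = ∫⁻ u, (if s < u then (1:ℝ≥0∞) else 0) ∂μ := by
        intro s
        have he : (fun u : ℝ => if s < u then (1:ℝ≥0∞) else 0) = (Ioi s).indicator 1 := by
          funext u; simp [indicator_apply, mem_Ioi]
        rw [he, lintegral_indicator_one measurableSet_Ioi]
      have h2 : ∀ u : ℝ, (∫⁻ s in Ioi x, (if s < u then (1:ℝ≥0∞) else 0)) =
          ENNReal.ofReal (max (u - x) 0) := by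
        intro u
        have he : (fun s : ℝ => if s < u then (1:ℝ≥0∞) else 0) = (Iio u).indicator 1 := by
          funext s; simp [indicator_apply, mem_Iio]
        rw [he, lintegral_indicator_one measurableSet_Iio,
          Measure.restrict_apply measurableSet_Iio, Iio_inter_Ioi, Real.volume_Ioo, ofReal_max0]
      calc ∫⁻ s in Ioi x, μ (Ioi s)
          = ∫⁻ s in Ioi x, ∫⁻ u, (if s < u then (1:ℝ≥0∞) else 0) ∂μ := by
            exact lintegral_congr h1
        _ = ∫⁻ u, (∫⁻ s in Ioi x, (if s < u then (1:ℝ≥0∞) else 0)) ∂μ := by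
            exact lintegral_lintegral_swap (μ := volume.restrict (Ioi x)) (ν := μ)
              (f := fun s u => if s < u then (1:ℝ≥0∞) else 0) hFmeas.aemeasurable
        _ = ∫⁻ u, ENNReal.ofReal (max (u - x) 0) ∂μ := by
            exact lintegral_congr (μ := μ) h2
    rw [← hswap, ← hstep2, htail,
      ← ENNReal.ofReal_add hL0 (by linarith [hLle x (le_of_lt hx)] : 0 ≤ g x - L)]
    congr 1
    ring
  refine ⟨ENNReal.ofReal L, μ, hSF, hμIic, ?_⟩
  intro x hx
  rcases eq_or_lt_of_le (mem_Ici.1 hx) with hx0 | hx0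
  swap
  · exact hmain x hx0
  subst hx0
  -- x = 0 via monotone limits
  set xseq : ℕ → ℝ := fun n => ((n:ℝ)+1)⁻¹ with hxseq
  have hxpos : ∀ n, 0 < xseq n := fun n => by positivity
  have hxtend : Tendsto xseq atTop (𝓝 0) := by
    simpa [hxseq, one_div] using tendsto_one_div_add_atTop_nhds_zero_nat (𝕜 := ℝ)
  have hxanti : Antitone xseq := by
    intro a b hab
    simp only [hxseq]
    have hab' : ((a:ℝ)) ≤ (b:ℝ) := by exact_mod_cast hab
    gcongr
  have hseq : ∀ n, ENNReal.ofReal (g (xseq n)) =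
      ENNReal.ofReal L + ∫⁻ u, ENNReal.ofReal (max (u - xseq n) 0) ∂μ :=
    fun n => hmain _ (hxpos n)
  have hLHS : Tendsto (fun n => ENNReal.ofReal (g (xseq n))) atTop
      (𝓝 (ENNReal.ofReal (g 0))) := by
    apply ENNReal.tendsto_ofReal
    have hgc : ContinuousWithinAt g (Ici 0) 0 := hc 0 self_mem_Ici
    apply hgc.tendsto.comp
    rw [tendsto_nhdsWithin_iff]
    exact ⟨hxtend, Eventually.of_forall fun n => le_of_lt (hxpos n)⟩
  have hImono : Monotone (fun n => ∫⁻ u, ENNReal.ofReal (max (u - xseq n) 0) ∂μ) := by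
    intro a b hab
    apply lintegral_mono
    intro u
    apply ENNReal.ofReal_le_ofReal
    exact max_le_max (by linarith [hxanti hab]) le_rfl
  have hsupI : (⨆ n, ∫⁻ u, ENNReal.ofReal (max (u - xseq n) 0) ∂μ)
      = ∫⁻ u, ENNReal.ofReal (max (u - 0) 0) ∂μ := by
    rw [← lintegral_iSup]
    · apply lintegral_congr
      intro u
      refine tendsto_nhds_unique (tendsto_atTop_iSup ?_) ?_
      · intro a b hab
        apply ENNReal.ofReal_le_ofReal
        exact max_le_max (by linarith [hxanti hab]) le_rfl
      · apply ENNReal.tendsto_ofReal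
        exact (tendsto_const_nhds.sub hxtend).max tendsto_const_nhds
    · intro n
      exact ((measurable_id.sub_const _).max measurable_const).ennreal_ofReal
    · intro a b hab
      intro u
      apply ENNReal.ofReal_le_ofReal
      exact max_le_max (by linarith [hxanti hab]) le_rfl
  have hRHStend : Tendsto (fun n => ENNReal.ofReal L +
      ∫⁻ u, ENNReal.ofReal (max (u - xseq n) 0) ∂μ) atTop
      (𝓝 (ENNReal.ofReal L + ∫⁻ u, ENNReal.ofReal (max (u - 0) 0) ∂μ)) := by
    rw [← hsupI]
    exact (tendsto_atTop_iSup hImono).const_add _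
  have hfun : (fun n => ENNReal.ofReal (g (xseq n)))
      = fun n => ENNReal.ofReal L + ∫⁻ u, ENNReal.ofReal (max (u - xseq n) 0) ∂μ :=
    funext hseq
  rw [hfun] at hLHS
  exact tendsto_nhds_unique hLHS hRHStend

lemma antitone_limit (g : ℝ → ℝ) (h0 : ∀ x ∈ Ici (0:ℝ), 0 ≤ g x) (ha : AntitoneOn g (Ici 0)) :
    0 ≤ sInf (g '' Ici 0) ∧ (∀ x ∈ Ici (0:ℝ), sInf (g '' Ici 0) ≤ g x) ∧
      Tendsto g atTop (𝓝 (sInf (g '' Ici 0))) := by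
  have hne : (g '' Ici 0).Nonempty := ⟨g 0, mem_image_of_mem g self_mem_Ici⟩
  have hbdd : BddBelow (g '' Ici 0) := ⟨0, by rintro y ⟨x, hx, rfl⟩; exact h0 x hx⟩
  have hL0 : 0 ≤ sInf (g '' Ici 0) := le_csInf hne (by rintro y ⟨x, hx, rfl⟩; exact h0 x hx)
  have hLle : ∀ x ∈ Ici (0:ℝ), sInf (g '' Ici 0) ≤ g x :=
    fun x hx => csInf_le hbdd (mem_image_of_mem g hx)
  refine ⟨hL0, hLle, ?_⟩
  rw [tendsto_order]
  constructor
  · intro b hb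
    filter_upwards [eventually_ge_atTop (0:ℝ)] with y hy
    exact lt_of_lt_of_le hb (hLle y hy)
  · intro b hb
    obtain ⟨z, hz, hzb⟩ := exists_lt_of_csInf_lt hne hb
    obtain ⟨y0, hy0, rfl⟩ := hz
    filter_upwards [eventually_ge_atTop y0] with y hy
    exact lt_of_le_of_lt (ha hy0 (le_trans hy0 hy) hy) hzb

lemma keyC (n : ℕ) : ∀ (g : ℝ → ℝ), ContDiffOn ℝ n g (Ici 0) →
    (∀ k ≤ n, (∀ x ∈ Ici (0:ℝ), 0 ≤ (-1:ℝ)^k * iteratedDerivWithin k g (Ici 0) x) ∧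
      AntitoneOn (fun x => (-1:ℝ)^k * iteratedDerivWithin k g (Ici 0) x) (Ici 0) ∧
      ConvexOn ℝ (Ici 0) (fun x => (-1:ℝ)^k * iteratedDerivWithin k g (Ici 0) x)) →
    ∃ (c : ℝ≥0∞) (μ : Measure ℝ), SFinite μ ∧ μ (Iic 0) = 0 ∧
      ∀ x ∈ Ici (0:ℝ), ENNReal.ofReal (g x) =
        c + ∫⁻ u, ENNReal.ofReal ((max (u - x) 0)^(n+1)) ∂μ := by
  induction n with
  | zero =>
    intro g hsm hk
    obtain ⟨h1, h2, h3⟩ := hk 0 le_rfl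
    simp only [pow_zero, one_mul, iteratedDerivWithin_zero] at h1 h2 h3
    obtain ⟨c, μ, hSF, hμ0, hrep⟩ := base_rep g hsm.continuousOn h1 h2 h3
    exact ⟨c, μ, hSF, hμ0, fun x hx => by simpa [pow_one] using hrep x hx⟩
  | succ n ih =>
    intro g hsm hk
    have hu : UniqueDiffOn ℝ (Ici (0:ℝ)) := uniqueDiffOn_Ici 0
    set h : ℝ → ℝ := derivWithin g (Ici 0) with hhdef
    have hsmh : ContDiffOn ℝ n h (Ici 0) := hsm.derivWithin hu (by exact_mod_cast le_rfl)
    have hsm' : ContDiffOn ℝ n (fun x => -h x) (Ici 0) := hsmh.neg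
    have hid : ∀ k, ∀ x ∈ Ici (0:ℝ), iteratedDerivWithin k (fun y => -h y) (Ici 0) x
        = -iteratedDerivWithin (k+1) g (Ici 0) x := by
      intro k x hx
      have e1 : iteratedDerivWithin k (fun y => -h y) (Ici 0) x
          = -iteratedDerivWithin k h (Ici 0) x := by
        have := iteratedDerivWithin_neg (𝕜 := ℝ) (n := k) (f := h) (s := Ici 0) (x := x)
        exact this
      rw [e1, ← iteratedDerivWithin_succ']
    have heq : ∀ k, ∀ x ∈ Ici (0:ℝ),
        (-1:ℝ)^k * iteratedDerivWithin k (fun y => -h y) (Ici 0) x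
        = (-1:ℝ)^(k+1) * iteratedDerivWithin (k+1) g (Ici 0) x := by
      intro k x hx
      rw [hid k x hx, pow_succ]
      ring
    have hk' : ∀ k ≤ n, (∀ x ∈ Ici (0:ℝ),
          0 ≤ (-1:ℝ)^k * iteratedDerivWithin k (fun y => -h y) (Ici 0) x) ∧
        AntitoneOn (fun x => (-1:ℝ)^k * iteratedDerivWithin k (fun y => -h y) (Ici 0) x) (Ici 0) ∧
        ConvexOn ℝ (Ici 0) (fun x => (-1:ℝ)^k * iteratedDerivWithin k (fun y => -h y) (Ici 0) x) := by
      intro k hkn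
      obtain ⟨p1, p2, p3⟩ := hk (k+1) (Nat.succ_le_succ hkn)
      refine ⟨fun x hx => ?_, fun a haa b hbb hab => ?_, ⟨convex_Ici 0, ?_⟩⟩
      · rw [heq k x hx]; exact p1 x hx
      · dsimp only
        rw [heq k a haa, heq k b hbb]; exact p2 haa hbb hab
      · intro x hx y hy a b haa hbb hab
        have hmem : a • x + b • y ∈ Ici (0:ℝ) := (convex_Ici 0) hx hy haa hbb hab
        simp only []
        rw [heq k _ hmem, heq k x hx, heq k y hy]
        exact p3.2 hx hy haa hbb hab
    obtain ⟨c', μ', hSF', hμ'0, hrep'⟩ := ih (fun y => -h y) hsm' hk'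
    haveI : SFinite μ' := hSF'
    -- basic facts about g
    obtain ⟨g1, g2, g3⟩ := hk 0 (Nat.zero_le _)
    simp only [pow_zero, one_mul, iteratedDerivWithin_zero] at g1 g2
    obtain ⟨hL0, hLle, hgL⟩ := antitone_limit g g1 g2
    set L := sInf (g '' Ici 0) with hLdef
    -- h is nonpositive on Ici 0
    have hhneg : ∀ s ∈ Ici (0:ℝ), h s ≤ 0 := by
      intro s hs
      have := (hk 1 (Nat.le_add_left 1 n)).1 s hs
      rw [iteratedDerivWithin_one] at this
      simpa using by linarith [this]
    -- FTC for g
    have hconth : ContinuousOn h (Ici 0) := hsmh.continuousOn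
    have hcontg : ContinuousOn g (Ici 0) := hsm.continuousOn
    have hftc : ∀ x, 0 ≤ x → ∀ y, x ≤ y → ∫ s in x..y, h s = g y - g x := by
      intro x hx y hxy
      have hsub : Icc x y ⊆ Ici (0:ℝ) := fun z hz => le_trans hx hz.1
      apply intervalIntegral.integral_eq_sub_of_hasDeriv_right_of_le hxy (hcontg.mono hsub)
      · intro s hs
        have hs0 : s ∈ Ici (0:ℝ) := le_trans hx (le_of_lt hs.1)
        have hdiff : DifferentiableWithinAt ℝ g (Ici 0) s :=
          (hsm.differentiableOn (by simp)) s hs0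
        exact hdiff.hasDerivWithinAt.mono (fun z hz => mem_Ici.2 (le_trans hs0 (le_of_lt hz)))
      · apply ContinuousOn.intervalIntegrable
        apply hconth.mono
        rw [uIcc_of_le hxy]
        exact fun z hz => le_trans hx hz.1
    have hint : ∀ x, 0 ≤ x → ∀ y, x ≤ y → IntervalIntegrable h volume x y := by
      intro x hx y hxy
      apply ContinuousOn.intervalIntegrable
      apply hconth.mono
      rw [uIcc_of_le hxy]
      exact fun z hz => le_trans hx hz.1
    have htail : ∀ x, 0 ≤ x → (∫⁻ s in Ioi x, ENNReal.ofReal (-(h s)))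
        = ENNReal.ofReal (g x - L) := by
      intro x hx
      exact tail_lintegral g h x L (hftc x hx) (hint x hx)
        (fun s hs => hhneg s (le_trans hx (le_of_lt hs))) hgL
    -- c' must vanish
    have hc'top : c' ≠ ⊤ := by
      intro htop
      have := hrep' 0 self_mem_Ici
      rw [htop] at this
      simp at this
    have hc'0 : c' = 0 := by
      by_contra hc'
      have hlow : ∀ s ∈ Ioi (0:ℝ), c' ≤ ENNReal.ofReal (-(h s)) := by
        intro s hs
        have := hrep' s (mem_Ici.2 (le_of_lt hs))
        rw [this]
        exact le_add_right le_rfl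
      have h2 : (∫⁻ s in Ioi (0:ℝ), c') ≤ ∫⁻ s in Ioi (0:ℝ), ENNReal.ofReal (-(h s)) := by
        apply lintegral_mono_ae
        rw [ae_restrict_iff' measurableSet_Ioi]
        exact ae_of_all _ hlow
      rw [setLIntegral_const, Real.volume_Ioi, ENNReal.mul_top hc', htail 0 le_rfl] at h2
      exact (by simp : ENNReal.ofReal (g 0 - L) ≠ ⊤) (top_le_iff.1 h2)
    -- inner integral computation
    have hinner : ∀ x, 0 ≤ x → ∀ u : ℝ,
        (∫⁻ s in Ioi x, ENNReal.ofReal ((max (u - s) 0)^(n+1)))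
        = ENNReal.ofReal ((max (u - x) 0)^(n+2) / (n+2)) := by
      intro x hx u
      rcases le_or_gt u x with hux | hux
      · have hz : ∀ s ∈ Ioi x, ENNReal.ofReal ((max (u - s) 0)^(n+1)) = 0 := by
          intro s hs
          rw [max_eq_right (by linarith [mem_Ioi.1 hs] : u - s ≤ 0)]
          simp
        rw [setLIntegral_congr_fun measurableSet_Ioi hz]
        rw [max_eq_right (by linarith : u - x ≤ 0)]
        simp
      · rw [← Ioc_union_Ioi_eq_Ioi (le_of_lt hux),
          lintegral_union measurableSet_Ioi (Ioc_disjoint_Ioi le_rfl)]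
        have hz : ∀ s ∈ Ioi u, ENNReal.ofReal ((max (u - s) 0)^(n+1)) = 0 := by
          intro s hs
          rw [max_eq_right (by linarith [mem_Ioi.1 hs] : u - s ≤ 0)]
          simp
        rw [setLIntegral_congr_fun measurableSet_Ioi hz, lintegral_zero, add_zero]
        have hcc : ∀ s ∈ Ioc x u, ENNReal.ofReal ((max (u - s) 0)^(n+1))
            = ENNReal.ofReal ((u - s)^(n+1)) := by
          intro s hs
          rw [max_eq_left (by linarith [hs.2] : 0 ≤ u - s)]
        rw [setLIntegral_congr_fun measurableSet_Ioc hcc]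
        have hInt : IntegrableOn (fun s => (u - s)^(n+1)) (Ioc x u) volume :=
          (((continuous_const.sub continuous_id).pow _).integrableOn_Ioc)
        have hnn : 0 ≤ᵐ[volume.restrict (Ioc x u)] fun s => (u - s)^(n+1) :=
          ae_restrict_of_forall_mem measurableSet_Ioc (fun s hs => by simp only [Pi.zero_apply]; exact pow_nonneg (by linarith [hs.2]) _)
        rw [← ofReal_integral_eq_lintegral_ofReal hInt hnn]
        congr 1
        rw [← intervalIntegral.integral_of_le (le_of_lt hux)]
        rw [intervalIntegral.integral_comp_sub_left (fun t => t^(n+1)) u]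
        rw [sub_self]
        rw [integral_pow]
        rw [max_eq_left (by linarith : 0 ≤ u - x)]
        push_cast
        ring
    -- assemble
    set cN : ℝ≥0∞ := ENNReal.ofReal (((n:ℝ)+2))⁻¹ with hcN
    set μN : Measure ℝ := cN • μ' with hμN
    have hSFN : SFinite μN := by rw [hμN]; infer_instance
    have hμN0 : μN (Iic 0) = 0 := by rw [hμN, Measure.smul_apply, hμ'0, smul_zero]
    refine ⟨ENNReal.ofReal L, μN, hSFN, hμN0, ?_⟩
    intro x hx
    have hx0 : (0:ℝ) ≤ x := hx
    have hcongr : (∫⁻ s in Ioi x, ENNReal.ofReal (-(h s)))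
        = ∫⁻ s in Ioi x, (∫⁻ u, ENNReal.ofReal ((max (u - s) 0)^(n+1)) ∂μ') := by
      apply lintegral_congr_ae
      filter_upwards [ae_restrict_mem measurableSet_Ioi] with s hs
      have hrs := hrep' s (le_trans hx0 (le_of_lt hs))
      rw [hc'0, zero_add] at hrs
      exact hrs
    have hFcont : Continuous (Function.uncurry
        (fun s u : ℝ => ENNReal.ofReal ((max (u - s) 0)^(n+1)))) :=
      ENNReal.continuous_ofReal.comp
        (((continuous_snd.sub continuous_fst).max continuous_const).pow _)
    have hswap : (∫⁻ s in Ioi x, (∫⁻ u, ENNReal.ofReal ((max (u - s) 0)^(n+1)) ∂μ'))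
        = ∫⁻ u, (∫⁻ s in Ioi x, ENNReal.ofReal ((max (u - s) 0)^(n+1))) ∂μ' :=
      lintegral_lintegral_swap (μ := volume.restrict (Ioi x)) (ν := μ')
        hFcont.measurable.aemeasurable
    have he2 : n + 1 + 1 = n + 2 := rfl
    have hμNint : (∫⁻ u, ENNReal.ofReal ((max (u - x) 0)^(n+1+1)) ∂μN)
        = ∫⁻ u, ENNReal.ofReal ((max (u - x) 0)^(n+2) / (n+2)) ∂μ' := by
      rw [hμN, lintegral_smul_measure, smul_eq_mul,
        ← lintegral_const_mul' _ _ (by rw [hcN]; exact ENNReal.ofReal_ne_top)]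
      apply lintegral_congr
      intro u
      rw [hcN, ← ENNReal.ofReal_mul (by positivity : (0:ℝ) ≤ ((n:ℝ)+2)⁻¹)]
      congr 1
      rw [he2, div_eq_mul_inv]
      ring
    calc ENNReal.ofReal (g x)
        = ENNReal.ofReal L + ENNReal.ofReal (g x - L) := by
          rw [← ENNReal.ofReal_add hL0 (by linarith [hLle x hx] : 0 ≤ g x - L)]
          congr 1; ring
      _ = ENNReal.ofReal L + ∫⁻ s in Ioi x, ENNReal.ofReal (-(h s)) := by rw [htail x hx0]
      _ = ENNReal.ofReal L + ∫⁻ u, (∫⁻ s in Ioi x, ENNReal.ofReal ((max (u - s) 0)^(n+1))) ∂μ' := by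
          rw [hcongr, hswap]
      _ = ENNReal.ofReal L + ∫⁻ u, ENNReal.ofReal ((max (u - x) 0)^(n+2) / (n+2)) ∂μ' := by
          congr 1
          exact lintegral_congr (fun u => hinner x hx0 u)
      _ = ENNReal.ofReal L + ∫⁻ u, ENNReal.ofReal ((max (u - x) 0)^(n+1+1)) ∂μN := by
          rw [hμNint]

lemma transfer (q : ℕ) (φ : ℝ → ℝ) (hsm : ContDiffOn ℝ q φ (Ici 0))
    (hks : ∀ k ≤ q, (∀ x ∈ Ici (0:ℝ), 0 ≤ (-1:ℝ)^k * iteratedDeriv k φ x) ∧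
      AntitoneOn (fun x => (-1:ℝ)^k * iteratedDeriv k φ x) (Ici 0) ∧
      ConvexOn ℝ (Ici 0) (fun x => (-1:ℝ)^k * iteratedDeriv k φ x)) :
    ∀ k ≤ q, (∀ x ∈ Ici (0:ℝ), 0 ≤ (-1:ℝ)^k * iteratedDerivWithin k φ (Ici 0) x) ∧
      AntitoneOn (fun x => (-1:ℝ)^k * iteratedDerivWithin k φ (Ici 0) x) (Ici 0) ∧
      ConvexOn ℝ (Ici 0) (fun x => (-1:ℝ)^k * iteratedDerivWithin k φ (Ici 0) x) := by
  have hu : UniqueDiffOn ℝ (Ici (0:ℝ)) := uniqueDiffOn_Ici 0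
  have heq : ∀ k, ∀ x ∈ Ioi (0:ℝ), iteratedDerivWithin k φ (Ici 0) x = iteratedDeriv k φ x := by
    intro k
    induction k with
    | zero => intro x _; simp
    | succ k ihk =>
      intro x hx
      have hmem : x ∈ Ici (0:ℝ) := mem_Ici.2 (le_of_lt hx)
      rw [iteratedDerivWithin_succ, derivWithin_of_mem_nhds (Ici_mem_nhds hx),
        iteratedDeriv_succ]
      apply Filter.EventuallyEq.deriv_eq
      filter_upwards [IsOpen.mem_nhds isOpen_Ioi hx] with y hy
      exact ihk y hy
  intro k hkq
  set d : ℝ → ℝ := fun x => (-1:ℝ)^k * iteratedDerivWithin k φ (Ici 0) x with hd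
  have hdc : ContinuousOn d (Ici 0) :=
    continuousOn_const.mul (hsm.continuousOn_iteratedDerivWithin (by exact_mod_cast hkq) hu)
  obtain ⟨p1, p2, p3⟩ := hks k hkq
  have hde : ∀ x ∈ Ioi (0:ℝ), d x = (-1:ℝ)^k * iteratedDeriv k φ x := by
    intro x hx
    rw [hd]
    simp only []
    rw [heq k x hx]
  have hd0lim : Tendsto d (𝓝[>] (0:ℝ)) (𝓝 (d 0)) :=
    (hdc 0 self_mem_Ici).tendsto.mono_left (nhdsWithin_mono 0 Ioi_subset_Ici_self)
  -- convexity on the open half-line, stated multiplicatively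
  have hconv' : ∀ x ∈ Ioi (0:ℝ), ∀ y ∈ Ioi (0:ℝ), ∀ a b : ℝ, 0 ≤ a → 0 ≤ b → a + b = 1 →
      d (a*x + b*y) ≤ a * d x + b * d y := by
    intro x hx y hy a b haa hbb hab
    have hc : 0 < a*x + b*y := by
      rcases eq_or_lt_of_le haa with rfl | ha'
      · have hb1 : b = 1 := by linarith
        rw [hb1]
        simpa using hy
      · have h2 : 0 ≤ b*y := mul_nonneg hbb (le_of_lt hy)
        nlinarith [mul_pos ha' hx]
    rw [hde _ hc, hde x hx, hde y hy]
    have := p3.2 (mem_Ici.2 (le_of_lt hx) : x ∈ Ici (0:ℝ)) (mem_Ici.2 (le_of_lt hy) : y ∈ Ici (0:ℝ)) haa hbb hab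
    simpa [smul_eq_mul] using this
  -- limit-extension for the endpoint in the convexity inequality
  have haux : ∀ y a b : ℝ, 0 < y → 0 ≤ a → 0 ≤ b → a + b = 1 →
      d (a*0 + b*y) ≤ a * d 0 + b * d y := by
    intro y a b hy haa hbb hab
    rcases eq_or_lt_of_le hbb with rfl | hb'
    · have ha1 : a = 1 := by linarith
      rw [ha1]
      simp
    have hz : 0 < b*y := mul_pos hb' hy
    have hco : ContinuousAt d (b*y) :=
      (hdc _ (mem_Ici.2 (le_of_lt hz))).continuousAt (Ici_mem_nhds hz)
    have hlhs : Tendsto (fun t => d (a*t + b*y)) (𝓝[>] (0:ℝ)) (𝓝 (d (b*y))) := by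
      apply hco.tendsto.comp
      have h1 : Tendsto (fun t : ℝ => a*t + b*y) (𝓝 (0:ℝ)) (𝓝 (a*0 + b*y)) := by
        exact ((continuous_const.mul continuous_id).add continuous_const).tendsto 0
      rw [mul_zero, zero_add] at h1
      exact h1.mono_left nhdsWithin_le_nhds
    have hrhs : Tendsto (fun t => a * d t + b * d y) (𝓝[>] (0:ℝ)) (𝓝 (a * d 0 + b * d y)) :=
      ((hd0lim.const_mul a).add tendsto_const_nhds)
    have hev : ∀ᶠ t in 𝓝[>] (0:ℝ), d (a*t + b*y) ≤ a * d t + b * d y := by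
      filter_upwards [self_mem_nhdsWithin] with t ht
      exact hconv' t ht y hy a b haa hbb hab
    have := le_of_tendsto_of_tendsto hlhs hrhs hev
    rw [mul_zero, zero_add]
    exact this
  refine ⟨?_, ?_, ?_⟩
  · intro x hx
    show (0:ℝ) ≤ d x
    rcases eq_or_lt_of_le (mem_Ici.1 hx) with hx0 | hx0
    · rw [← hx0]
      apply ge_of_tendsto hd0lim
      filter_upwards [self_mem_nhdsWithin] with y hy
      rw [hde y hy]
      exact p1 y (mem_Ici.2 (le_of_lt hy))
    · rw [hde x hx0]
      exact p1 x hx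
  · intro a haa b hbb hab
    show d b ≤ d a
    rcases eq_or_lt_of_le (mem_Ici.1 haa) with ha0 | ha0
    · rcases eq_or_lt_of_le hab with rfl | hab'
      · exact le_rfl
      have hb0 : (0:ℝ) < b := by rw [← ha0] at hab'; exact hab'
      rw [← ha0]
      apply ge_of_tendsto hd0lim
      filter_upwards [Ioo_mem_nhdsGT_of_mem (⟨le_rfl, hb0⟩ : (0:ℝ) ∈ Ico 0 b)] with y hy
      rw [hde y hy.1, hde b (lt_trans hy.1 hy.2)]
      exact p2 (mem_Ici.2 (le_of_lt hy.1)) (mem_Ici.2 (le_of_lt (lt_trans hy.1 hy.2))) (le_of_lt hy.2)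
    · rw [hde a ha0, hde b (lt_of_lt_of_le ha0 hab)]
      exact p2 haa hbb hab
  · refine ⟨convex_Ici 0, ?_⟩
    intro x hx y hy a b haa hbb hab
    show d (a • x + b • y) ≤ a • d x + b • d y
    simp only [smul_eq_mul]
    rcases eq_or_lt_of_le (mem_Ici.1 hx) with hx0 | hx0
    · rcases eq_or_lt_of_le (mem_Ici.1 hy) with hy0 | hy0
      · rw [← hx0, ← hy0]
        have hcomb : a*(0:ℝ) + b*0 = 0 := by ring
        rw [hcomb]
        have : a * d 0 + b * d 0 = d 0 := by rw [← add_mul, hab, one_mul]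
        exact le_of_eq this.symm
      · rw [← hx0]
        exact haux y a b hy0 haa hbb hab
    · rcases eq_or_lt_of_le (mem_Ici.1 hy) with hy0 | hy0
      · rw [← hy0]
        have h1 : a*x + b*0 = b*0 + a*x := by ring
        rw [h1]
        have h2 := haux x b a hx0 hbb haa (by linarith)
        linarith [h2]
      · exact hconv' x hx0 y hy0 a b haa hbb hab

/-- f is m-times monotone on ℝ₊ (m ≥ 1): for m = 1 it is nonnegative and nonincreasing;
for m ≥ 2, (-1)^k f^{(k)} is nonnegative, nonincreasing and convex for k = 0,…,m-2. -/
def MultiplyMonotone (m : ℕ) (f : ℝ → ℝ) : Prop :=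
  if m = 1 then (∀ x ∈ Ici (0:ℝ), 0 ≤ f x) ∧ AntitoneOn f (Ici 0)
  else
    ContDiffOn ℝ (m - 2 : ℕ) f (Ici 0) ∧
      ∀ k ≤ m - 2,
        (∀ x ∈ Ici (0:ℝ), 0 ≤ (-1 : ℝ) ^ k * iteratedDeriv k f x) ∧
        AntitoneOn (fun x => (-1 : ℝ) ^ k * iteratedDeriv k f x) (Ici 0) ∧
        ConvexOn ℝ (Ici 0) (fun x => (-1 : ℝ) ^ k * iteratedDeriv k f x)

/-- Williamson's theorem: a (q+2)-times monotone function on ℝ₊ is a nonnegative mixture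
of truncated power functions x ↦ (1 - t x)₊^{q+1}. -/
theorem williamson_representation (q : ℕ) (φ : ℝ → ℝ)
    (hφ : MultiplyMonotone (q + 2) φ) :
    ∃ ν : Measure ℝ, ν (Iio 0) = 0 ∧
      ∀ x ∈ Ici (0:ℝ), φ x = ∫ t, (max (1 - t * x) 0) ^ (q + 1) ∂ν := by
  rw [MultiplyMonotone, if_neg (by omega : ¬ q + 2 = 1),
    (by omega : q + 2 - 2 = q)] at hφ
  obtain ⟨hsm, hks⟩ := hφ
  have hφ0 : ∀ x ∈ Ici (0:ℝ), 0 ≤ φ x := by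
    intro x hx
    have := (hks 0 (Nat.zero_le _)).1 x hx
    simpa using this
  obtain ⟨c, μ, hSF, hμ0, hrep⟩ := keyC q φ hsm (transfer q φ hsm hks)
  haveI := hSF
  set dens : ℝ → ℝ≥0∞ := fun u => ENNReal.ofReal (u^(q+1)) with hdens
  have hdensm : Measurable dens := (measurable_id.pow_const _).ennreal_ofReal
  set ν : Measure ℝ := c • Measure.dirac 0 +
    Measure.map (fun u : ℝ => u⁻¹) (μ.withDensity dens) with hν
  have hμIio : μ (Iio 0) = 0 := measure_mono_null Iio_subset_Iic_self hμ0
  have hμae : ∀ᵐ u ∂μ, 0 < u := by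
    rw [ae_iff]
    refine measure_mono_null ?_ hμ0
    intro u hu
    simpa using hu
  refine ⟨ν, ?_, ?_⟩
  · rw [hν]
    rw [Measure.add_apply, Measure.smul_apply,
      Measure.dirac_apply' 0 measurableSet_Iio,
      Measure.map_apply measurable_inv measurableSet_Iio]
    have h1 : (fun u : ℝ => u⁻¹) ⁻¹' (Iio 0) = Iio 0 := by
      ext u
      simp [inv_lt_zero]
    rw [h1, withDensity_apply _ measurableSet_Iio, setLIntegral_measure_zero _ _ hμIio]
    simp
  · intro x hx
    have hx0 : (0:ℝ) ≤ x := hx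
    -- the lintegral computation
    have hker : Measurable (fun t : ℝ => ENNReal.ofReal ((max (1 - t*x) 0)^(q+1))) := by
      apply Measurable.ennreal_ofReal
      exact (((measurable_id.mul_const x).const_sub 1).max measurable_const).pow_const _
    have hker' : Measurable (fun t : ℝ => ENNReal.ofReal ((max (1 - t*x) 0)^(q+1))) := hker
    have hlin : (∫⁻ t, ENNReal.ofReal ((max (1 - t*x) 0)^(q+1)) ∂ν) = ENNReal.ofReal (φ x) := by
      rw [hν, lintegral_add_measure, lintegral_smul_measure, lintegral_dirac,
        lintegral_map hker measurable_inv,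
        lintegral_withDensity_eq_lintegral_mul _ hdensm ?_]
      swap
      · exact hker.comp measurable_inv
      have hcongr : ∀ᵐ u ∂μ, (dens * fun u => ENNReal.ofReal ((max (1 - u⁻¹*x) 0)^(q+1))) u
          = ENNReal.ofReal ((max (u - x) 0)^(q+1)) := by
        filter_upwards [hμae] with u hu
        simp only [Pi.mul_apply, hdens]
        rw [← ENNReal.ofReal_mul (by positivity : (0:ℝ) ≤ u^(q+1)), ← mul_pow]
        congr 2
        rw [mul_max_of_nonneg _ _ (le_of_lt hu)]
        rw [mul_sub, mul_one, mul_zero]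
        congr 1
        field_simp
      rw [lintegral_congr_ae hcongr, hrep x hx]
      simp
    -- from lintegral to Bochner integral
    have hnn : 0 ≤ᵐ[ν] fun t => (max (1 - t*x) 0)^(q+1) :=
      ae_of_all _ (fun t => pow_nonneg (le_max_right _ _) _)
    have hmeas : AEStronglyMeasurable (fun t => (max (1 - t*x) 0)^(q+1)) ν := by
      apply Continuous.aestronglyMeasurable
      exact ((continuous_const.sub (continuous_id.mul continuous_const)).max continuous_const).pow _
    rw [integral_eq_lintegral_of_nonneg_ae hnn hmeas]
    rw [hlin, ENNReal.toReal_ofReal (hφ0 x hx)]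
end

section
/- Let d ≥ 1 and let f : ℝ^d → ℝ be a continuous integrable stationary covariance kernel whose spectral density (Fourier transform) is nonnegative and strictly positive on a nonempty open subset of ℝ^d. Then f is positive definite: for any distinct points x₁,…,xₙ ∈ ℝ^d and any nonzero ω ∈ ℝⁿ, Σᵢⱼ ωᵢωⱼ f(xᵢ - xⱼ) > 0. -/
/-!
Writing `f` through its spectral density, the quadratic form becomes
`∫ ‖∑ᵢ ωᵢ 𝐞 ⟪u, xᵢ⟫‖² F u du`. The trigonometric polynomial `u ↦ ∑ᵢ ωᵢ 𝐞 ⟪u, xᵢ⟫` is real-analytic,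
and by Dedekind's independence of characters it is not identically zero when the frequencies `xᵢ`
are distinct and `ω ≠ 0`. By the identity theorem it is then nonzero somewhere on the open set
where `F > 0`, hence on a nonempty open set where the integrand is positive.
-/

open Real MeasureTheory Set Function

open scoped FourierTransform

theorem linearIndependent_addChar (G L : Type*) [AddMonoid G] [CommRing L] [IsDomain L] :
    LinearIndependent L ((⇑) : AddChar G L → G → L) :=
  (linearIndependent_monoidHom (Multiplicative G) L).comp AddChar.toMonoidHom
    AddChar.toMonoidHomEquiv.injective

theorem integral_pos_of_isOpen_subset_support {X : Type*} [TopologicalSpace X]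
    [MeasurableSpace X] {μ : Measure X} [μ.IsOpenPosMeasure] {g : X → ℝ} (hg : 0 ≤ g)
    (hgi : Integrable g μ) {V : Set X} (hV : IsOpen V) (hVne : V.Nonempty)
    (hVg : V ⊆ support g) :
    0 < ∫ x, g x ∂μ :=
  (integral_pos_iff_support_of_nonneg hg hgi).2 ((hV.measure_pos μ hVne).trans_le
    (measure_mono hVg))

theorem norm_sum_mul_fourierChar_sq {ι : Type*} [Fintype ι] (ω a : ι → ℝ) :
    ‖∑ i, (ω i : ℂ) * 𝐞 (a i)‖ ^ 2 = ∑ i, ∑ j, ω i * ω j * Real.cos (2 * π * (a i - a j)) := by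
  rw [← Complex.normSq_eq_norm_sq, ← Complex.ofReal_re (Complex.normSq _), ← Complex.mul_conj,
    map_sum, Finset.sum_mul_sum, Complex.re_sum]
  refine Finset.sum_congr rfl fun i _ => ?_
  rw [Complex.re_sum]
  refine Finset.sum_congr rfl fun j _ => ?_
  rw [map_mul, Complex.conj_ofReal, Circle.starRingEnd_addChar, mul_mul_mul_comm,
    ← Circle.coe_mul, ← AddChar.map_add_eq_mul, ← sub_eq_add_neg, ← Complex.ofReal_mul,
    Complex.re_ofReal_mul, fourierChar_apply, Complex.exp_ofReal_mul_I_re]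

section InnerProductSpace

variable {E : Type*} [NormedAddCommGroup E] [InnerProductSpace ℝ E]

noncomputable def innerFourierChar (x : E) : AddChar E ℂ where
  toFun u := 𝐞 (inner ℝ u x)
  map_zero_eq_one' := by simp
  map_add_eq_mul' u v := by simp [inner_add_left, AddChar.map_add_eq_mul]

theorem innerFourierChar_injective : Injective (innerFourierChar : E → AddChar E ℂ) := by
  intro x y hxy
  by_contra hne
  have hv : ‖x - y‖ ^ 2 ≠ 0 := by simpa [sub_eq_zero] using hne
  refine fourierChar_ne_one (AddChar.ext _ _ fun t => ?_)
  set u := (t / ‖x - y‖ ^ 2) • (x - y)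
  have hu : inner ℝ u (x - y) = t := by
    rw [real_inner_smul_left, real_inner_self_eq_norm_sq, div_mul_cancel₀ _ hv]
  have hxy' : 𝐞 (inner ℝ u x) = 𝐞 (inner ℝ u y) :=
    Circle.coe_injective (DFunLike.congr_fun hxy u)
  rw [AddChar.one_apply, ← hu, inner_sub_right, AddChar.map_sub_eq_div, hxy', div_self']

theorem analyticAt_innerFourierChar (x u : E) : AnalyticAt ℝ (innerFourierChar x) u := by
  have harg : AnalyticAt ℝ (fun u : E => ((2 * π * inner ℝ u x : ℝ) : ℂ) * Complex.I) u :=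
    ((Complex.ofRealCLM.analyticAt _).comp
      (analyticAt_const.mul ((innerSLFlip ℝ x).analyticAt u))).mul analyticAt_const
  exact analyticAt_cexp.restrictScalars.comp harg

variable {ι : Type*} [Fintype ι]

noncomputable def trigPoly (x : ι → E) (ω : ι → ℝ) (u : E) : ℂ :=
  ∑ i, (ω i : ℂ) * innerFourierChar (x i) u

theorem analyticOnNhd_trigPoly (x : ι → E) (ω : ι → ℝ) :
    AnalyticOnNhd ℝ (trigPoly x ω) univ := fun u _ =>
  Finset.analyticAt_fun_sum _ fun _ _ => analyticAt_const.mul (analyticAt_innerFourierChar _ u)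

theorem eq_zero_of_trigPoly_eqOn_zero {x : ι → E} (hx : Injective x) {ω : ι → ℝ} {U : Set E}
    (hU : IsOpen U) (hU_ne : U.Nonempty) (h : EqOn (trigPoly x ω) 0 U) : ω = 0 := by
  obtain ⟨u₀, hu₀⟩ := hU_ne
  have hzero : trigPoly x ω = 0 :=
    (analyticOnNhd_trigPoly x ω).eq_of_eventuallyEq analyticOnNhd_const
      (Filter.eventuallyEq_of_mem (hU.mem_nhds hu₀) h)
  have hli := (linearIndependent_addChar E ℂ).comp _
    (innerFourierChar_injective.comp hx)
  funext i
  exact_mod_cast Fintype.linearIndependent_iff.1 hli (fun i => (ω i : ℂ))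
    (by simpa [funext_iff, trigPoly] using hzero) i

theorem norm_trigPoly_sq (x : ι → E) (ω : ι → ℝ) (u : E) :
    ‖trigPoly x ω u‖ ^ 2 =
      ∑ i, ∑ j, ω i * ω j * Real.cos (2 * π * inner ℝ u (x i - x j)) := by
  simp_rw [inner_sub_right]
  exact norm_sum_mul_fourierChar_sq ω _

theorem norm_trigPoly_sq_mul_eq_sum (x : ι → E) (ω : ι → ℝ) (F : E → ℝ) :
    (fun u => ‖trigPoly x ω u‖ ^ 2 * F u) = fun u =>
      ∑ i, ∑ j, ω i * ω j * (Real.cos (2 * π * inner ℝ u (x i - x j)) * F u) := by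
  funext u
  simp only [norm_trigPoly_sq, Finset.sum_mul, mul_assoc]

variable [MeasurableSpace E] [OpensMeasurableSpace E] {μ : Measure E} {F : E → ℝ}

theorem integrable_cos_inner_mul (hF : Integrable F μ) (h : E) :
    Integrable (fun u => Real.cos (2 * π * inner ℝ u h) * F u) μ :=
  hF.bdd_mul (by fun_prop) (c := 1) (Filter.Eventually.of_forall fun u => by
    simpa only [Real.norm_eq_abs] using Real.abs_cos_le_one _)

theorem integrable_norm_trigPoly_sq_mul (hF : Integrable F μ) (x : ι → E) (ω : ι → ℝ) :
    Integrable (fun u => ‖trigPoly x ω u‖ ^ 2 * F u) μ := by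
  rw [norm_trigPoly_sq_mul_eq_sum]
  exact integrable_finsetSum _ fun i _ => integrable_finsetSum _ fun j _ =>
    (integrable_cos_inner_mul hF _).const_mul _

theorem sum_sum_mul_integral_cos_inner_mul (hF : Integrable F μ) (x : ι → E) (ω : ι → ℝ) :
    ∑ i, ∑ j, ω i * ω j * ∫ u, Real.cos (2 * π * inner ℝ u (x i - x j)) * F u ∂μ =
      ∫ u, ‖trigPoly x ω u‖ ^ 2 * F u ∂μ := by
  have hint : ∀ i j, Integrable
      (fun u => ω i * ω j * (Real.cos (2 * π * inner ℝ u (x i - x j)) * F u)) μ :=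
    fun i j => (integrable_cos_inner_mul hF _).const_mul _
  rw [norm_trigPoly_sq_mul_eq_sum,
    integral_finsetSum _ fun i _ => integrable_finsetSum _ fun j _ => hint i j]
  refine Finset.sum_congr rfl fun i _ => ?_
  rw [integral_finsetSum _ fun j _ => hint i j]
  simp only [integral_const_mul]

end InnerProductSpace

theorem posdef_of_spectral_density_pos_on_open_general
    (d : ℕ)
    (f : EuclideanSpace ℝ (Fin d) → ℝ)
    (F : EuclideanSpace ℝ (Fin d) → ℝ) (hF_int : Integrable F)
    (hF_nonneg : ∀ u, 0 ≤ F u)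
    (hBochner : ∀ h : EuclideanSpace ℝ (Fin d),
      f h = ∫ u, Real.cos (2 * Real.pi * (inner ℝ u h : ℝ)) * F u)
    (U : Set (EuclideanSpace ℝ (Fin d))) (hU_open : IsOpen U) (hU_ne : U.Nonempty)
    (hF_pos : ∀ u ∈ U, 0 < F u) :
    ∀ (n : ℕ) (x : Fin n → EuclideanSpace ℝ (Fin d)), Function.Injective x →
      ∀ ω : Fin n → ℝ, ω ≠ 0 →
        0 < ∑ i, ∑ j, ω i * ω j * f (x i - x j) := by
  intro n x hx ω hω
  obtain ⟨u₀, hu₀U, hu₀⟩ : ∃ u₀ ∈ U, trigPoly x ω u₀ ≠ 0 := by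
    by_contra! h
    exact hω (eq_zero_of_trigPoly_eqOn_zero hx hU_open hU_ne h)
  simp_rw [hBochner, sum_sum_mul_integral_cos_inner_mul hF_int x ω]
  refine integral_pos_of_isOpen_subset_support
    (fun u => mul_nonneg (sq_nonneg _) (hF_nonneg u)) (integrable_norm_trigPoly_sq_mul hF_int x ω)
    (hU_open.inter (analyticOnNhd_trigPoly x ω).continuous.isOpen_support) ⟨u₀, hu₀U, hu₀⟩ ?_
  rintro u ⟨huU, hu⟩
  exact (mul_pos (pow_pos (norm_pos_iff.2 hu) 2) (hF_pos u huU)).ne'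

/-- A continuous integrable stationary covariance kernel whose nonnegative spectral
density is strictly positive on a nonempty open set is positive definite (not just
semidefinite). -/
theorem posdef_of_spectral_density_pos_on_open
    (d : ℕ) (hd : 1 ≤ d)
    (f : EuclideanSpace ℝ (Fin d) → ℝ) (hf_cont : Continuous f) (hf_int : Integrable f)
    (F : EuclideanSpace ℝ (Fin d) → ℝ) (hF_int : Integrable F)
    (hF_nonneg : ∀ u, 0 ≤ F u)
    (hBochner : ∀ h : EuclideanSpace ℝ (Fin d),
      f h = ∫ u, Real.cos (2 * Real.pi * (inner ℝ u h : ℝ)) * F u)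
    (U : Set (EuclideanSpace ℝ (Fin d))) (hU_open : IsOpen U) (hU_ne : U.Nonempty)
    (hF_pos : ∀ u ∈ U, 0 < F u) :
    ∀ (n : ℕ) (x : Fin n → EuclideanSpace ℝ (Fin d)), Function.Injective x →
      ∀ ω : Fin n → ℝ, ω ≠ 0 →
        0 < ∑ i, ∑ j, ω i * ω j * f (x i - x j) :=
  posdef_of_spectral_density_pos_on_open_general d f F hF_int hF_nonneg hBochner U hU_open hU_ne
    hF_pos
end
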